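/- arXiv:2102.05778 — 5 statements merged into one kernel-verified Lean document; each statement's English description precedes it below -/
import Mathlib

section
/- Let x, y ∈ {0,1}^n with x_{ij} ≤ y_{ij} for all i, j (y selects a superset of the items selected by x), and suppose E[W(y)] < B. Then β(x) ≤ β(y): adding items can only increase the Chebyshev surrogate of the probability of violating the chance constraint. -/
open Finset
open scoped ENNReal

noncomputable section

/-- Number of one-bits (selected items) of a solution. -/
def numOnes (K m : ℕ) (x : Fin K → Fin m → Bool) : ℕ :=
  ∑ i, ∑ j, if x i j then 1 else 0

/-- Covariance contribution `2c·Σᵢ Σ_{j1<j2} x_{ij1}·x_{ij2}` of a solution. -/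
def cova (K m : ℕ) (c : ℝ) (x : Fin K → Fin m → Bool) : ℝ :=
  2 * c * ∑ i, ∑ p ∈ Finset.univ.filter (fun p : Fin m × Fin m => p.1 < p.2),
      (if x i p.1 then (1 : ℝ) else 0) * (if x i p.2 then (1 : ℝ) else 0)

/-- Expected weight `E[W(x)] = a·|x|₁`. -/
def expWeight (K m : ℕ) (a : ℝ) (x : Fin K → Fin m → Bool) : ℝ :=
  a * (numOnes K m x : ℝ)

/-- Variance `Var[W(x)] = d·|x|₁ + 2c·Σᵢ Σ_{j1<j2} x_{ij1}·x_{ij2}`. -/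
def varWeight (K m : ℕ) (d c : ℝ) (x : Fin K → Fin m → Bool) : ℝ :=
  d * (numOnes K m x : ℝ) + cova K m c x

/-- Chebyshev surrogate `β(x) = Var[W(x)] / (Var[W(x)] + (B − E[W(x)])²)`. -/
def chebBeta (K m : ℕ) (a d c B : ℝ) (x : Fin K → Fin m → Bool) : ℝ :=
  varWeight K m d c x / (varWeight K m d c x + (B - expWeight K m a x) ^ 2)

/-- A solution is feasible if `E[W(x)] < B` and `β(x) ≤ α`. -/
def feasible (K m : ℕ) (a d c B α : ℝ) (x : Fin K → Fin m → Bool) : Prop :=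
  expWeight K m a x < B ∧ chebBeta K m a d c B x ≤ α

/-- `β'(x) = β(x)` if `E[W(x)] < B`, and `β'(x) = 1 + E[W(x)] − B` otherwise. -/
def betaPrime (K m : ℕ) (a d c B : ℝ) (x : Fin K → Fin m → Bool) : ℝ :=
  if expWeight K m a x < B then chebBeta K m a d c B x else 1 + expWeight K m a x - B

/-- Total profit `p(x) = Σᵢⱼ p_{ij}·x_{ij}`. -/
def profitOf (K m : ℕ) (profit : Fin K → Fin m → ℝ) (x : Fin K → Fin m → Bool) : ℝ :=
  ∑ i, ∑ j, if x i j then profit i j else 0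

/-- `p'(x) = −1` if `β'(x) > α`, and `p'(x) = p(x)` otherwise. -/
def pPrime (K m : ℕ) (a d c B α : ℝ) (profit : Fin K → Fin m → ℝ)
    (x : Fin K → Fin m → Bool) : ℝ :=
  if α < betaPrime K m a d c B x then -1 else profitOf K m profit x

/-- Lexicographic fitness dominance: `f(y) ⪰ f(x)` iff `p'(y) > p'(x)`, or
`p'(y) = p'(x)` and `β'(y) ≤ β'(x)`. -/
def fge (K m : ℕ) (a d c B α : ℝ) (profit : Fin K → Fin m → ℝ)
    (y x : Fin K → Fin m → Bool) : Prop :=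
  pPrime K m a d c B α profit x < pPrime K m a d c B α profit y ∨
    (pPrime K m a d c B α profit y = pPrime K m a d c B α profit x ∧
      betaPrime K m a d c B y ≤ betaPrime K m a d c B x)

/-- Hamming distance between two solutions. -/
def hdist (K m : ℕ) (x y : Fin K → Fin m → Bool) : ℕ :=
  ∑ i, ∑ j, if x i j = y i j then 0 else 1

/-- Standard-bit mutation of the (1+1) EA: each bit flips independently with
probability `1/n`, so `y` is produced from `x` with probability
`(1/n)^{H(x,y)}·(1 − 1/n)^{n − H(x,y)}`. -/
def mutEA (K m : ℕ) (x y : Fin K → Fin m → Bool) : ℝ≥0∞ :=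
  (1 / (K * m : ℝ≥0∞)) ^ hdist K m x y *
    (1 - 1 / (K * m : ℝ≥0∞)) ^ (K * m - hdist K m x y)

/-- RLS mutation: with probability `1/2` flip one uniformly random bit, with probability
`1/2` flip a uniformly random pair of distinct bits; so a one-bit-flip neighbour is
produced with probability `1/(2n)` and a two-bit-flip neighbour with probability
`1/(n(n−1))`. -/
def mutRLS (K m : ℕ) (x y : Fin K → Fin m → Bool) : ℝ≥0∞ :=
  if hdist K m x y = 1 then 1 / (2 * (K * m : ℝ≥0∞))
  else if hdist K m x y = 2 then 1 / ((K * m : ℝ≥0∞) * ((K * m : ℝ≥0∞) - 1))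
  else 0

open scoped Classical in
/-- One-step transition probability of an elitist algorithm with mutation distribution
`mutD` and acceptance relation `acc y x` (= "`f(y) ⪰ f(x)`"): the offspring is accepted
iff `acc`, otherwise the algorithm stays at `x`. -/
def stepP (K m : ℕ)
    (mutD : (Fin K → Fin m → Bool) → (Fin K → Fin m → Bool) → ℝ≥0∞)
    (acc : (Fin K → Fin m → Bool) → (Fin K → Fin m → Bool) → Prop)
    (x y : Fin K → Fin m → Bool) : ℝ≥0∞ :=
  (if acc y x then mutD x y else 0) +
    (if y = x then ∑ z, (if acc z x then 0 else mutD x z) else 0)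

open scoped Classical in
/-- `hitVec K m P A x₀ t y` is the probability that the Markov chain with transition
matrix `P` started at `x₀` has not visited the target set `A` during the first `t` steps
and is currently at `y`. -/
def hitVec (K m : ℕ)
    (P : (Fin K → Fin m → Bool) → (Fin K → Fin m → Bool) → ℝ≥0∞)
    (A : (Fin K → Fin m → Bool) → Prop) (x₀ : Fin K → Fin m → Bool) :
    ℕ → (Fin K → Fin m → Bool) → ℝ≥0∞
  | 0 => fun y => if y = x₀ ∧ ¬ A y then 1 else 0
  | (t + 1) => fun y => if A y then 0 else ∑ x, hitVec K m P A x₀ t x * P x y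

/-- Expected hitting time `E[min {t : X_t ∈ A}]` of the target set `A` for the Markov
chain with transition matrix `P` started at `x₀`, computed as `Σ_{t≥0} Pr(T > t)`. -/
def expHitTime (K m : ℕ)
    (P : (Fin K → Fin m → Bool) → (Fin K → Fin m → Bool) → ℝ≥0∞)
    (A : (Fin K → Fin m → Bool) → Prop) (x₀ : Fin K → Fin m → Bool) : ℝ≥0∞ :=
  ∑' t : ℕ, ∑ y, hitVec K m P A x₀ t y

/-- Covariance `s_ℓ^b` of a balanced solution with `ℓ` one-bits: with `q = ⌊ℓ/K⌋` and
`t = ℓ − qK`, it is `c·[(K − t)·q(q − 1) + t·(q + 1)q]`. -/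
def balCov (K : ℕ) (c : ℝ) (ℓ : ℕ) : ℝ :=
  c * (((K - (ℓ - (ℓ / K) * K)) * ((ℓ / K) * (ℓ / K - 1)) +
        (ℓ - (ℓ / K) * K) * ((ℓ / K + 1) * (ℓ / K)) : ℕ) : ℝ)

/-- The solution obtained from `y` by setting bit `(i, j)` to one. -/
def flipUp (K m : ℕ) (y : Fin K → Fin m → Bool) (i : Fin K) (j : Fin m) :
    Fin K → Fin m → Bool :=
  fun i' j' => if i' = i ∧ j' = j then true else y i' j'

end

/-- Adding items can only increase the Chebyshev surrogate: if `y` selects a superset of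
the items selected by `x` and `E[W(y)] < B`, then `β(x) ≤ β(y)`. -/
theorem chebBeta_monotone (K m : ℕ) (hK : 1 ≤ K) (hm : 1 ≤ m) (a d c B : ℝ)
    (ha : 0 < a) (hd : 0 < d) (hc : 0 < c) (hB : 0 < B)
    (x y : Fin K → Fin m → Bool) (hxy : ∀ i j, x i j = true → y i j = true)
    (hEW : expWeight K m a y < B) :
    chebBeta K m a d c B x ≤ chebBeta K m a d c B y := by
  classical
  have hones : (numOnes K m x : ℝ) ≤ (numOnes K m y : ℝ) := by
    have : numOnes K m x ≤ numOnes K m y := by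
      unfold numOnes
      refine Finset.sum_le_sum fun i _ => Finset.sum_le_sum fun j _ => ?_
      by_cases h : x i j
      · simp [h, hxy i j h]
      · simp [h]
    exact_mod_cast this
  have hones0 : (0 : ℝ) ≤ (numOnes K m x : ℝ) := Nat.cast_nonneg _
  have hcov0 : 0 ≤ cova K m c x := by
    unfold cova
    refine mul_nonneg (by linarith) ?_
    refine Finset.sum_nonneg fun i _ => Finset.sum_nonneg fun p _ => ?_
    refine mul_nonneg ?_ ?_ <;> split <;> norm_num
  have hcov : cova K m c x ≤ cova K m c y := by
    unfold cova
    refine mul_le_mul_of_nonneg_left ?_ (by linarith)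
    refine Finset.sum_le_sum fun i _ => Finset.sum_le_sum fun p _ => ?_
    by_cases h1 : x i p.1 <;> by_cases h2 : x i p.2 <;>
      simp [h1, h2, hxy i p.1, hxy i p.2] <;> positivity
  have hVx : 0 ≤ varWeight K m d c x := by
    unfold varWeight; positivity
  have hV : varWeight K m d c x ≤ varWeight K m d c y := by
    unfold varWeight
    have := mul_le_mul_of_nonneg_left hones hd.le
    linarith
  have hE : expWeight K m a x ≤ expWeight K m a y := by
    unfold expWeight numOnes at *
    exact mul_le_mul_of_nonneg_left hones ha.le
  have hsy : 0 < B - expWeight K m a y := by linarith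
  have hsx : 0 < B - expWeight K m a x := by linarith
  have hs : B - expWeight K m a y ≤ B - expWeight K m a x := by linarith
  unfold chebBeta
  rw [div_le_div_iff₀ (by nlinarith) (by nlinarith)]
  nlinarith [mul_le_mul hV (mul_le_mul hs hs hsy.le hsx.le) (by nlinarith) (by linarith)]
end

section
/- Let K, m ≥ 1 and 0 ≤ ℓ ≤ K·m, and set q = ⌊ℓ/K⌋ and t = ℓ − q·K. For every function r : {1,…,K} → ℕ with r_i ≤ m for all i and Σ_{i=1}^K r_i = ℓ, one has Σ_{i=1}^K r_i(r_i − 1) ≥ (K − t)·q(q − 1) + t·(q + 1)q. In particular, the balanced selection (taking q items from K − t groups and q + 1 items from the remaining t groups) minimizes the covariance s(x) = 2c·Σ_{i=1}^K Σ_{1≤j1<j2≤m} x_{ij1}x_{ij2} = c·Σ_{i=1}^K r_i(r_i − 1) among all solutions with exactly ℓ one-bits. -/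
/-- The balanced selection minimizes the within-group covariance: for `0 ≤ ℓ ≤ K·m`,
`q = ⌊ℓ/K⌋` and `t = ℓ − q·K`, every selection `r : Fin K → ℕ` with `rᵢ ≤ m` and
`Σ rᵢ = ℓ` satisfies `Σ rᵢ(rᵢ − 1) ≥ (K − t)·q(q − 1) + t·(q + 1)q`. -/
theorem balanced_minimizes_covariance (K m ℓ : ℕ) (hK : 1 ≤ K) (hm : 1 ≤ m)
    (hℓ : ℓ ≤ K * m) (r : Fin K → ℕ) (hr : ∀ i, r i ≤ m) (hsum : ∑ i, r i = ℓ) :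
    (K - (ℓ - (ℓ / K) * K)) * ((ℓ / K) * (ℓ / K - 1)) +
        (ℓ - (ℓ / K) * K) * ((ℓ / K + 1) * (ℓ / K)) ≤
      ∑ i, r i * (r i - 1) := by
  set q := ℓ / K with hqdef
  set t := ℓ % K with htdef
  have hℓeq : q * K + t = ℓ := by
    rw [hqdef, htdef, Nat.mul_comm]; exact Nat.div_add_mod ℓ K
  have ht1 : ℓ - q * K = t := by rw [← hℓeq, Nat.add_sub_cancel_left]
  have htK : t < K := Nat.mod_lt _ hK
  rw [ht1]
  have hsq : ∀ n : ℕ, n * (n - 1) + n = n * n := by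
    intro n
    cases n with
    | zero => rfl
    | succ k => simp [Nat.succ_sub_one, Nat.mul_succ]
  have hS : ∑ i, r i * (r i - 1) + ℓ = ∑ i, r i * r i := by
    rw [← hsum, ← Finset.sum_add_distrib]
    exact Finset.sum_congr rfl fun i _ => hsq (r i)
  have hl : (K - t) * q + t * (q + 1) = ℓ := by
    have h2 : (K - t) * q + t * q = K * q := by
      rw [← Nat.add_mul, Nat.sub_add_cancel htK.le]
    calc (K - t) * q + t * (q + 1) = ((K - t) * q + t * q) + t := by ring
      _ = K * q + t := by rw [h2]
      _ = ℓ := by rw [Nat.mul_comm K q]; exact hℓeq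
  have e1 : q * q = q * (q - 1) + q := (hsq q).symm
  have e2 : (q + 1) * (q + 1) = (q + 1) * q + (q + 1) := by ring
  have hR : (K - t) * (q * (q - 1)) + t * ((q + 1) * q) + ℓ
      = (K - t) * (q * q) + t * ((q + 1) * (q + 1)) := by
    rw [← hl, e1, e2]
    generalize K - t = A
    generalize q - 1 = B
    ring
  have main : (K - t) * (q * q) + t * ((q + 1) * (q + 1)) ≤ ∑ i, r i * r i := by
    have hcast : ∀ i : Fin K,
        (q : ℤ) * q + (2 * q + 1) * ((r i : ℤ) - q) ≤ (r i : ℤ) * (r i : ℤ) := by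
      intro i
      rcases le_or_gt (r i) q with h | h
      · have h' : (r i : ℤ) ≤ q := by exact_mod_cast h
        nlinarith
      · have h' : (q : ℤ) + 1 ≤ r i := by exact_mod_cast h
        nlinarith
    have hsumZ : ∑ i, ((q : ℤ) * q + (2 * q + 1) * ((r i : ℤ) - q))
        ≤ ∑ i, (r i : ℤ) * (r i : ℤ) :=
      Finset.sum_le_sum fun i _ => hcast i
    have hsumRZ : ∑ i, ((r i : ℤ)) = (ℓ : ℤ) := by exact_mod_cast hsum
    have hLHS : ∑ i, ((q : ℤ) * q + (2 * q + 1) * ((r i : ℤ) - q))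
        = (K : ℤ) * (q * q) + (2 * q + 1) * ((ℓ : ℤ) - K * q) := by
      rw [Finset.sum_add_distrib, Finset.sum_const, ← Finset.mul_sum]
      simp only [Finset.card_univ, Fintype.card_fin, nsmul_eq_mul]
      rw [Finset.sum_sub_distrib, hsumRZ, Finset.sum_const]
      simp only [Finset.card_univ, Fintype.card_fin, nsmul_eq_mul]
    have : ((K - t : ℕ) * (q * q) + t * ((q + 1) * (q + 1)) : ℤ)
        ≤ ∑ i, (r i : ℤ) * (r i : ℤ) := by
      push_cast [Nat.cast_sub htK.le]
      calc ((K : ℤ) - t) * (q * q) + t * ((q + 1) * (q + 1))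
          = (K : ℤ) * (q * q) + (2 * q + 1) * ((ℓ : ℤ) - K * q) := by
            have hℓZ : (ℓ : ℤ) = q * K + t := by exact_mod_cast hℓeq.symm
            rw [hℓZ]; ring
        _ = ∑ i, ((q : ℤ) * q + (2 * q + 1) * ((r i : ℤ) - q)) := hLHS.symm
        _ ≤ _ := hsumZ
    exact_mod_cast this
  have final : (K - t) * (q * (q - 1)) + t * ((q + 1) * q) + ℓ
      ≤ ∑ i, r i * (r i - 1) + ℓ := by
    rw [hR, hS]; exact main
  exact le_of_add_le_add_right final
end

section
/- Let K, m ≥ 1 and 0 ≤ ℓ ≤ K·m, and set u = ℓ − ⌊ℓ/m⌋·m. For every function r : {1,…,K} → ℕ with r_i ≤ m for all i and Σ_{i=1}^K r_i = ℓ, one has Σ_{i=1}^K r_i(r_i − 1) ≤ ⌊ℓ/m⌋·m(m − 1) + u(u − 1). In particular, the most unbalanced selection (filling ⌊ℓ/m⌋ groups completely and putting the remaining u items in one further group) maximizes the covariance s(x) = c·Σ_{i=1}^K r_i(r_i − 1) among all solutions with exactly ℓ one-bits. -/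
private lemma cast_mul_pred (n : ℕ) : ((n * (n - 1) : ℕ) : ℤ) = (n : ℤ) * ((n : ℤ) - 1) := by
  cases n with
  | zero => simp
  | succ k => push_cast [Nat.succ_sub_one]; ring

private lemma g_step (m a b : ℕ) (hm : 1 ≤ m) (ha : a ≤ m) :
    (b / m) * (m * (m - 1)) + (b % m) * ((b % m) - 1) + a * (a - 1) ≤
    ((b + a) / m) * (m * (m - 1)) + ((b + a) % m) * (((b + a) % m) - 1) := by
  have hm' : 0 < m := hm
  set q := b / m with hq
  set v := b % m with hv
  have hvm : v < m := Nat.mod_lt _ hm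
  have hb : b = q * m + v := by
    rw [hq, hv, Nat.mul_comm]; exact (Nat.div_add_mod b m).symm
  by_cases hcase : v + a < m
  · have hdiv : (b + a) / m = q := by
      rw [hb, show q * m + v + a = (v + a) + q * m by ring,
        Nat.add_mul_div_right _ _ hm', Nat.div_eq_of_lt hcase]
      omega
    have hmod : (b + a) % m = v + a := by
      rw [hb, show q * m + v + a = (v + a) + q * m by ring,
        Nat.add_mul_mod_self_right, Nat.mod_eq_of_lt hcase]
    rw [hdiv, hmod]
    have key : v * (v - 1) + a * (a - 1) ≤ (v + a) * ((v + a) - 1) := by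
      have h : ((v * (v - 1) : ℕ) : ℤ) + ((a * (a - 1) : ℕ) : ℤ) ≤
          (((v + a) * ((v + a) - 1) : ℕ) : ℤ) := by
        rw [cast_mul_pred, cast_mul_pred, cast_mul_pred]
        push_cast
        nlinarith [Int.natCast_nonneg v, Int.natCast_nonneg a]
      exact_mod_cast h
    omega
  · push_neg at hcase
    have hdiv : (b + a) / m = q + 1 := by
      rw [hb, show q * m + v + a = (v + a) + q * m by ring,
        Nat.add_mul_div_right _ _ hm']
      have h1 : (v + a) / m = 1 :=
        Nat.div_eq_of_lt_le (by omega) (by omega)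
      omega
    have hmod : (b + a) % m = v + a - m := by
      rw [hb, show q * m + v + a = (v + a) + q * m by ring,
        Nat.add_mul_mod_self_right, Nat.mod_eq_sub_mod hcase,
        Nat.mod_eq_of_lt (by omega)]
    rw [hdiv, hmod]
    set w := v + a - m with hw
    have key : v * (v - 1) + a * (a - 1) ≤ m * (m - 1) + w * (w - 1) := by
      have h : ((v * (v - 1) : ℕ) : ℤ) + ((a * (a - 1) : ℕ) : ℤ) ≤
          ((m * (m - 1) : ℕ) : ℤ) + ((w * (w - 1) : ℕ) : ℤ) := by
        rw [cast_mul_pred, cast_mul_pred, cast_mul_pred, cast_mul_pred]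
        have hwz : (w : ℤ) = (v : ℤ) + a - m := by
          have h2 : v + a = w + m := by omega
          have h3 := congrArg (Nat.cast : ℕ → ℤ) h2
          push_cast at h3; linarith
        have hv' : (v : ℤ) ≤ m := by exact_mod_cast hvm.le
        have ha' : (a : ℤ) ≤ m := by exact_mod_cast ha
        nlinarith [mul_nonneg (by linarith : (0:ℤ) ≤ (m:ℤ) - v)
          (by linarith : (0:ℤ) ≤ (m:ℤ) - a)]
      exact_mod_cast h
    have hexp : (q + 1) * (m * (m - 1)) = q * (m * (m - 1)) + m * (m - 1) := by ring
    omega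

private lemma aux (m : ℕ) (hm : 1 ≤ m) : ∀ (K : ℕ) (r : Fin K → ℕ), (∀ i, r i ≤ m) →
    ∑ i, r i * (r i - 1) ≤
      ((∑ i, r i) / m) * (m * (m - 1)) +
        ((∑ i, r i) % m) * (((∑ i, r i) % m) - 1) := by
  intro K
  induction K with
  | zero => intro r _; simp
  | succ n ih =>
    intro r hr
    rw [Fin.sum_univ_castSucc (f := fun i => r i * (r i - 1)),
        Fin.sum_univ_castSucc (f := fun i => r i)]
    calc ∑ i : Fin n, r i.castSucc * (r i.castSucc - 1) + r (Fin.last n) * (r (Fin.last n) - 1)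
        ≤ ((∑ i : Fin n, r i.castSucc) / m) * (m * (m - 1)) +
            ((∑ i : Fin n, r i.castSucc) % m) * (((∑ i : Fin n, r i.castSucc) % m) - 1) +
            r (Fin.last n) * (r (Fin.last n) - 1) :=
          Nat.add_le_add_right (ih (fun i => r i.castSucc) fun i => hr _) _
      _ ≤ _ := g_step m (r (Fin.last n)) _ hm (hr _)

/-- The most unbalanced selection maximizes the within-group covariance: for `0 ≤ ℓ ≤ K·m`
and `u = ℓ − ⌊ℓ/m⌋·m`, every selection `r : Fin K → ℕ` with `rᵢ ≤ m` and `Σ rᵢ = ℓ`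
satisfies `Σ rᵢ(rᵢ − 1) ≤ ⌊ℓ/m⌋·m(m − 1) + u(u − 1)`. -/
theorem unbalanced_maximizes_covariance (K m ℓ : ℕ) (hK : 1 ≤ K) (hm : 1 ≤ m)
    (hℓ : ℓ ≤ K * m) (r : Fin K → ℕ) (hr : ∀ i, r i ≤ m) (hsum : ∑ i, r i = ℓ) :
    ∑ i, r i * (r i - 1) ≤
      (ℓ / m) * (m * (m - 1)) + (ℓ - (ℓ / m) * m) * ((ℓ - (ℓ / m) * m) - 1) := by
  have hmod : ℓ - (ℓ / m) * m = ℓ % m := by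
    have h1 := Nat.div_add_mod ℓ m
    have h2 : ℓ / m * m = m * (ℓ / m) := Nat.mul_comm _ _
    omega
  rw [hmod]
  subst hsum
  exact aux m hm K r hr
end

section
/- Let x ∈ {0,1}^n be a solution with |x|_1 = ℓ. Then there exist an integer q ≥ 0 and q pairwise distinct solutions y_1, …, y_q ∈ {0,1}^n, each obtained from x by flipping exactly one 1-bit of x to 0 and exactly one 0-bit of x to 1 (so |y_i|_1 = ℓ and the Hamming distance between x and y_i is 2), such that s(y_i) ≤ s(x) for every i and Σ_{i=1}^q (s(x) − s(y_i)) ≥ s(x) − s_ℓ^b. -/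
open Finset
open scoped ENNReal

section Aux

lemma sum_ite_point {M : Type*} [AddCommMonoid M] (m : ℕ) (f g : Fin m → M) (p : Fin m) :
    (∑ j, if j = p then g j else f j) + f p = g p + ∑ j, f j := by
  have h1 : (∑ j, if j = p then g j else f j) = ∑ j, Function.update f p (g p) j := by
    apply Finset.sum_congr rfl
    intro j _
    by_cases h : j = p
    · subst h; simp
    · simp [Function.update, h]
  rw [h1, Finset.sum_update_of_mem (Finset.mem_univ p),
    Finset.sum_eq_sum_sdiff_singleton_add (Finset.mem_univ p) f, add_assoc]

/-- two point version -/
lemma sum_two_point {M : Type*} [AddCommMonoid M] (K : ℕ) (G : Fin K → M) (a b : Fin K)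
    (hab : a ≠ b) (u v : M) :
    (∑ i, if i = a then u else if i = b then v else G i) + G a + G b
      = u + v + ∑ i, G i := by
  have h1 := sum_ite_point K (fun i => if i = b then v else G i) (fun _ => u) a
  have h2 := sum_ite_point K G (fun _ => v) b
  simp only [if_neg hab] at h1
  calc (∑ i, if i = a then u else if i = b then v else G i) + G a + G b
      = (u + ∑ i, if i = b then v else G i) + G b := by rw [add_assoc, ← add_assoc, h1]
    _ = u + (v + ∑ i, G i) := by rw [add_assoc, h2]
    _ = u + v + ∑ i, G i := by rw [add_assoc]

def cntB (m : ℕ) (f : Fin m → Bool) : ℕ := ∑ j, if f j then 1 else 0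

lemma cntB_le (m : ℕ) (f : Fin m → Bool) : cntB m f ≤ m := by
  have : cntB m f ≤ ∑ _j : Fin m, 1 := Finset.sum_le_sum (fun j _ => by split <;> omega)
  simpa using this

end Aux

section Cova

lemma key_pairs (m : ℕ) (f : Fin m → Bool) :
    2 * (∑ p ∈ Finset.univ.filter (fun p : Fin m × Fin m => p.1 < p.2),
        (if f p.1 then (1:ℝ) else 0) * (if f p.2 then (1:ℝ) else 0))
      = (cntB m f : ℝ)^2 - (cntB m f : ℝ) := by
  set F : Fin m → ℝ := fun j => if f j then 1 else 0 with hF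
  have hFF : ∀ j, F j * F j = F j := by intro j; simp only [hF]; split <;> norm_num
  have hcnt : (cntB m f : ℝ) = ∑ j, F j := by
    unfold cntB; push_cast; rfl
  have hsq : (∑ j, F j)^2 = ∑ p : Fin m × Fin m, F p.1 * F p.2 := by
    rw [sq, Finset.sum_mul_sum, Fintype.sum_prod_type]
  have hsplit : ∑ p : Fin m × Fin m, F p.1 * F p.2
      = (∑ p ∈ Finset.univ.filter (fun p : Fin m × Fin m => p.1 < p.2), F p.1 * F p.2)
      + ((∑ p ∈ Finset.univ.filter (fun p : Fin m × Fin m => p.1 = p.2), F p.1 * F p.2)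
      + (∑ p ∈ Finset.univ.filter (fun p : Fin m × Fin m => p.2 < p.1), F p.1 * F p.2)) := by
    rw [← Finset.sum_filter_add_sum_filter_not Finset.univ
        (fun p : Fin m × Fin m => p.1 < p.2) (fun p => F p.1 * F p.2)]
    congr 1
    rw [← Finset.sum_filter_add_sum_filter_not
        (Finset.univ.filter (fun p : Fin m × Fin m => ¬ p.1 < p.2))
        (fun p : Fin m × Fin m => p.1 = p.2) (fun p => F p.1 * F p.2)]
    congr 2
    · rw [Finset.filter_filter]
      apply Finset.filter_congr
      intro p _
      simp only [Fin.lt_def, Fin.ext_iff]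
      omega
    · rw [Finset.filter_filter]
      apply Finset.filter_congr
      intro p _
      simp only [Fin.lt_def, Fin.ext_iff]
      omega
  have hdiag : ∑ p ∈ Finset.univ.filter (fun p : Fin m × Fin m => p.1 = p.2), F p.1 * F p.2
      = ∑ j, F j := by
    rw [Finset.sum_filter, Fintype.sum_prod_type]
    apply Finset.sum_congr rfl
    intro j _
    rw [Finset.sum_ite_eq Finset.univ j (fun j' => F j * F j')]
    simp [hFF]
  have hgt : ∑ p ∈ Finset.univ.filter (fun p : Fin m × Fin m => p.2 < p.1), F p.1 * F p.2
      = ∑ p ∈ Finset.univ.filter (fun p : Fin m × Fin m => p.1 < p.2), F p.1 * F p.2 := by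
    rw [Finset.sum_filter, Finset.sum_filter, Fintype.sum_prod_type, Fintype.sum_prod_type]
    rw [Finset.sum_comm]
    apply Finset.sum_congr rfl; intro j _; apply Finset.sum_congr rfl; intro j' _
    by_cases h : j' < j <;> simp [h, mul_comm]
  have := hsq
  rw [hsplit, hdiag, hgt] at this
  rw [hcnt]
  nlinarith [this]

lemma cova_eq (K m : ℕ) (c : ℝ) (x : Fin K → Fin m → Bool) :
    cova K m c x = c * ∑ i, ((cntB m (x i) : ℝ)^2 - (cntB m (x i) : ℝ)) := by
  unfold cova
  rw [Finset.mul_sum, Finset.mul_sum]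
  apply Finset.sum_congr rfl
  intro i _
  rw [← key_pairs m (x i)]
  ring
end Cova

section Swap

def swapSol (K m : ℕ) (x : Fin K → Fin m → Bool) (a : Fin K) (p : Fin m)
    (b : Fin K) (r : Fin m) : Fin K → Fin m → Bool :=
  fun i j => if i = a ∧ j = p then false else if i = b ∧ j = r then true else x i j

variable {K m : ℕ} {x : Fin K → Fin m → Bool} {a b : Fin K} {p r : Fin m}

lemma swap_row_a (hab : a ≠ b) : swapSol K m x a p b r a = fun j => if j = p then false else x a j := by
  funext j; simp [swapSol, hab]

lemma swap_row_b (hab : a ≠ b) : swapSol K m x a p b r b = fun j => if j = r then true else x b j := by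
  funext j; simp [swapSol, Ne.symm hab]

lemma swap_row_other {i : Fin K} (hia : i ≠ a) (hib : i ≠ b) : swapSol K m x a p b r i = x i := by
  funext j; simp [swapSol, hia, hib]

lemma swap_at_down : swapSol K m x a p b r a p = false := by simp [swapSol]

lemma swap_eval_other {i : Fin K} {j : Fin m} (h1 : ¬(i = a ∧ j = p)) (h2 : ¬(i = b ∧ j = r)) :
    swapSol K m x a p b r i j = x i j := by simp [swapSol, h1, h2]

lemma cnt_swap_a (hab : a ≠ b) (hxp : x a p = true) :
    cntB m (swapSol K m x a p b r a) + 1 = cntB m (x a) := by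
  rw [swap_row_a hab]
  have h := sum_ite_point m (fun j => if x a j then (1:ℕ) else 0) (fun _ => 0) p
  simp only [hxp, if_true] at h
  have h2 : cntB m (fun j => if j = p then false else x a j)
      = ∑ j, if j = p then 0 else (if x a j then (1:ℕ) else 0) := by
    unfold cntB
    apply Finset.sum_congr rfl; intro j _; by_cases hj : j = p <;> simp [hj]
  rw [h2]
  unfold cntB
  omega

lemma cnt_swap_b (hab : a ≠ b) (hxr : x b r = false) :
    cntB m (swapSol K m x a p b r b) = cntB m (x b) + 1 := by
  rw [swap_row_b hab]
  have h := sum_ite_point m (fun j => if x b j then (1:ℕ) else 0) (fun _ => 1) r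
  have h3 : (if x b r = true then (1:ℕ) else 0) = 0 := by simp [hxr]
  have h2 : cntB m (fun j => if j = r then true else x b j)
      = ∑ j, if j = r then 1 else (if x b j then (1:ℕ) else 0) := by
    unfold cntB
    apply Finset.sum_congr rfl; intro j _; by_cases hj : j = r <;> simp [hj]
  rw [h2]
  unfold cntB
  omega

lemma cnt_swap_other {i : Fin K} (hia : i ≠ a) (hib : i ≠ b) :
    cntB m (swapSol K m x a p b r i) = cntB m (x i) := by
  rw [swap_row_other hia hib]

lemma numOnes_swap (hab : a ≠ b) (hxp : x a p = true) (hxr : x b r = false) :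
    numOnes K m (swapSol K m x a p b r) = numOnes K m x := by
  have hN : ∀ z : Fin K → Fin m → Bool, numOnes K m z = ∑ i, cntB m (z i) := by
    intro z; rfl
  rw [hN, hN]
  set y := swapSol K m x a p b r with hy
  have hcongr : (∑ i, cntB m (y i))
      = ∑ i, (if i = a then cntB m (y a) else if i = b then cntB m (y b) else cntB m (x i)) := by
    apply Finset.sum_congr rfl; intro i _
    by_cases hia : i = a
    · simp [hia]
    · by_cases hib : i = b
      · simp [hia, hib, Ne.symm hab]
      · simp [hia, hib, hy, cnt_swap_other hia hib]
  have h2 := sum_two_point K (fun i => cntB m (x i)) a b hab (cntB m (y a)) (cntB m (y b))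
  have ha := cnt_swap_a (x := x) (p := p) (r := r) hab hxp
  have hb := cnt_swap_b (x := x) (p := p) (r := r) hab hxr
  rw [← hy] at ha hb
  rw [hcongr]
  omega

lemma hdist_swap (hab : a ≠ b) (hxp : x a p = true) (hxr : x b r = false) :
    hdist K m x (swapSol K m x a p b r) = 2 := by
  set y := swapSol K m x a p b r with hy
  have hyb : y b r = true := by rw [hy, swap_row_b hab]; simp
  have hrow : ∀ i, (∑ j, if x i j = y i j then 0 else 1)
      = (if i = a then 1 else if i = b then 1 else 0) := by
    intro i
    by_cases hia : i = a
    · subst hia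
      have hterm : ∀ j, (if x i j = y i j then 0 else 1) = (if j = p then 1 else 0) := by
        intro j
        by_cases hj : j = p
        · subst hj
          have h1 : y i j = false := swap_at_down
          simp [h1, hxp]
        · have h1 : y i j = x i j := by
            rw [hy]
            refine swap_eval_other (by tauto) ?_
            rintro ⟨h1, h2⟩
            exact hab h1
          simp [h1, hj]
      rw [Finset.sum_congr rfl (fun j _ => hterm j),
        Finset.sum_ite_eq' Finset.univ p (fun _ => 1)]
      simp
    · by_cases hib : i = b
      · subst hib
        have hterm : ∀ j, (if x i j = y i j then 0 else 1) = (if j = r then 1 else 0) := by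
          intro j
          by_cases hj : j = r
          · subst hj; simp [hyb, hxr]
          · have h1 : y i j = x i j := by
              rw [hy]
              exact swap_eval_other (by tauto) (by tauto)
            simp [h1, hj]
        rw [Finset.sum_congr rfl (fun j _ => hterm j),
          Finset.sum_ite_eq' Finset.univ r (fun _ => 1)]
        simp [hia]
      · have h1 : y i = x i := swap_row_other hia hib
        simp [h1, hia, hib]
  unfold hdist
  rw [Finset.sum_congr rfl (fun i _ => hrow i)]
  have h2 := sum_two_point K (fun _ : Fin K => (0:ℕ)) a b hab 1 1
  simpa using h2

lemma cova_swap (c : ℝ) (hab : a ≠ b) (hxp : x a p = true) (hxr : x b r = false) :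
    cova K m c (swapSol K m x a p b r)
      = cova K m c x - 2 * c * ((cntB m (x a) : ℝ) - 1 - (cntB m (x b) : ℝ)) := by
  set y := swapSol K m x a p b r with hy
  have hone : 1 ≤ cntB m (x a) := by
    have := cnt_swap_a (x := x) (p := p) (r := r) (b := b) hab hxp
    omega
  have ha : (cntB m (y a) : ℝ) = (cntB m (x a) : ℝ) - 1 := by
    have := cnt_swap_a (x := x) (p := p) (r := r) (b := b) hab hxp
    have : (cntB m (y a) : ℝ) + 1 = (cntB m (x a) : ℝ) := by exact_mod_cast congrArg (Nat.cast : ℕ → ℝ) this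
    linarith
  have hb : (cntB m (y b) : ℝ) = (cntB m (x b) : ℝ) + 1 := by
    have := cnt_swap_b (x := x) (p := p) (r := r) (a := a) hab hxr
    exact_mod_cast congrArg (Nat.cast : ℕ → ℝ) this
  rw [cova_eq, cova_eq]
  set A := (cntB m (x a) : ℝ) with hA
  set B := (cntB m (x b) : ℝ) with hB
  have hcongr : (∑ i, ((cntB m (y i) : ℝ)^2 - (cntB m (y i) : ℝ)))
      = ∑ i, (if i = a then ((A-1)^2 - (A-1)) else if i = b then ((B+1)^2 - (B+1))
          else ((cntB m (x i) : ℝ)^2 - (cntB m (x i) : ℝ))) := by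
    apply Finset.sum_congr rfl; intro i _
    by_cases hia : i = a
    · subst hia; simp only [if_true, ha]
    · by_cases hib : i = b
      · subst hib; simp only [hia, if_false, if_true, hb]
      · simp only [hia, hib, if_false, hy, cnt_swap_other hia hib]
  have h2 := sum_two_point K (fun i => ((cntB m (x i) : ℝ)^2 - (cntB m (x i) : ℝ))) a b hab
      ((A-1)^2 - (A-1)) ((B+1)^2 - (B+1))
  rw [hcongr]
  have h3 : (∑ i, (if i = a then ((A-1)^2 - (A-1)) else if i = b then ((B+1)^2 - (B+1))
          else ((cntB m (x i) : ℝ)^2 - (cntB m (x i) : ℝ))))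
      = ((A-1)^2 - (A-1)) + ((B+1)^2 - (B+1))
        + (∑ i, ((cntB m (x i) : ℝ)^2 - (cntB m (x i) : ℝ))) - ((A^2 - A) + (B^2 - B)) := by
    rw [← h2]; ring
  rw [h3]; ring
end Swap

lemma group_ineq (N T : ℕ) :
    ((N:ℝ)^2 - (N:ℝ)) - ((T*(T-1) : ℕ) : ℝ)
      ≤ 2*(((N - T : ℕ):ℝ)*((N:ℝ)-1) - ((T - N : ℕ):ℝ)*(N:ℝ)) := by
  rcases le_or_gt T N with h | h
  · have he : ((N - T : ℕ):ℝ) = (N:ℝ) - (T:ℝ) := by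
      rw [Nat.cast_sub h]
    have hd : ((T - N : ℕ):ℝ) = 0 := by
      rw [Nat.sub_eq_zero_of_le h]; norm_num
    rcases Nat.eq_zero_or_pos T with h0 | h0
    · subst h0
      simp only [Nat.zero_mul, Nat.cast_zero, sub_zero] at *
      rw [he, hd]
      rcases Nat.eq_zero_or_pos N with hN | hN
      · subst hN; norm_num
      · have : (1:ℝ) ≤ (N:ℝ) := by exact_mod_cast hN
        nlinarith
    · have hT : ((T*(T-1) : ℕ) : ℝ) = (T:ℝ)*((T:ℝ)-1) := by
        push_cast [Nat.cast_sub h0]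
        ring
      rw [he, hd, hT]
      rcases eq_or_lt_of_le h with heq | hlt
      · subst heq; ring_nf; nlinarith
      · have h1 : (T:ℝ) + 1 ≤ (N:ℝ) := by exact_mod_cast hlt
        have h2 : (1:ℝ) ≤ (T:ℝ) := by exact_mod_cast h0
        nlinarith [mul_nonneg (by linarith : (0:ℝ) ≤ (N:ℝ) - T) (by linarith : (0:ℝ) ≤ (N:ℝ) - T - 1)]
  · have he : ((N - T : ℕ):ℝ) = 0 := by
      rw [Nat.sub_eq_zero_of_le h.le]; norm_num
    have hd : ((T - N : ℕ):ℝ) = (T:ℝ) - (N:ℝ) := by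
      rw [Nat.cast_sub h.le]
    have h0 : 1 ≤ T := by omega
    have hT : ((T*(T-1) : ℕ) : ℝ) = (T:ℝ)*((T:ℝ)-1) := by
      push_cast [Nat.cast_sub h0]
      ring
    rw [he, hd, hT]
    have h1 : (N:ℝ) + 1 ≤ (T:ℝ) := by exact_mod_cast h
    have h2 : (0:ℝ) ≤ (N:ℝ) := Nat.cast_nonneg N
    nlinarith [mul_nonneg (by linarith : (0:ℝ) ≤ (T:ℝ) - N) (by linarith : (0:ℝ) ≤ (T:ℝ) - N - 1)]


/-- For any solution `x` with `ℓ = |x|₁` one-bits there exist `q ≥ 0` pairwise distinct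
solutions `y₁, …, y_q`, each obtained from `x` by flipping exactly one 1-bit to 0 and one
0-bit to 1 (i.e. `|yᵢ|₁ = ℓ` and Hamming distance 2 from `x`), such that `s(yᵢ) ≤ s(x)`
for all `i` and `Σᵢ (s(x) − s(yᵢ)) ≥ s(x) − s_ℓ^b`. -/
theorem swap_flips_reduce_covariance (K m : ℕ) (hK : 1 ≤ K) (hm : 1 ≤ m)
    (c : ℝ) (hc : 0 < c) (x : Fin K → Fin m → Bool) :
    ∃ (q : ℕ) (y : Fin q → (Fin K → Fin m → Bool)),
      Function.Injective y ∧
      (∀ i, numOnes K m (y i) = numOnes K m x ∧ hdist K m x (y i) = 2) ∧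
      (∀ i, cova K m c (y i) ≤ cova K m c x) ∧
      cova K m c x - balCov K c (numOnes K m x) ≤
        ∑ i, (cova K m c x - cova K m c (y i)) := by
  classical
  have hℓn : numOnes K m x = ∑ i, cntB m (x i) := rfl
  set ℓ := numOnes K m x with hℓ
  set q0 := ℓ / K with hq0
  set t := ℓ % K with ht
  have htK : t < K := Nat.mod_lt ℓ (by omega)
  have hdm : K * q0 + t = ℓ := Nat.div_add_mod ℓ K
  have hℓle : ℓ ≤ K * m := by
    rw [hℓn]
    calc ∑ i, cntB m (x i) ≤ ∑ _i : Fin K, m :=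
          Finset.sum_le_sum (fun i _ => cntB_le m (x i))
      _ = K * m := by simp [Finset.sum_const, mul_comm]
  obtain ⟨T, hTsub, hTcard⟩ := Finset.exists_subset_card_eq (s := (Finset.univ : Finset (Fin K))) (n := t)
    (by simpa using htK.le)
  set τ : Fin K → ℕ := fun i => if i ∈ T then q0 + 1 else q0 with hτ
  have hτdef : ∀ i, τ i = if i ∈ T then q0 + 1 else q0 := fun i => rfl
  have hτq : ∀ i, τ i = q0 ∨ τ i = q0 + 1 := by
    intro i; rw [hτdef i]; by_cases h : i ∈ T <;> simp [h]
  have hτm : ∀ i, τ i ≤ m := by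
    intro i
    rw [hτdef i]
    by_cases hiT : i ∈ T
    · have h1 : 1 ≤ t := by
        rw [← hTcard]
        exact Finset.card_pos.mpr ⟨i, hiT⟩
      simp only [hiT, if_true]
      by_contra hcon
      push_neg at hcon
      have h2 : K * m ≤ K * q0 := Nat.mul_le_mul_left K (by omega)
      omega
    · simp only [hiT, if_false]
      by_contra hcon
      push_neg at hcon
      have h2 : K * (m + 1) ≤ K * q0 := Nat.mul_le_mul_left K (by omega)
      have h3 : K * (m + 1) = K * m + K := by ring
      omega
  have hτsum : ∑ i, τ i = ℓ := by
    have h1 : ∀ i ∈ Finset.univ, τ i = q0 + (if i ∈ T then 1 else 0) := by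
      intro i _; rw [hτdef i]; by_cases h : i ∈ T <;> simp [h]
    have h2 : (∑ _i : Fin K, q0) = K * q0 := by simp [Finset.sum_const, mul_comm]
    have h3 : (∑ i : Fin K, if i ∈ T then 1 else 0) = t := by
      rw [Finset.sum_ite_mem, Finset.univ_inter, Finset.sum_const, hTcard]; simp
    rw [Finset.sum_congr rfl h1, Finset.sum_add_distrib, h2, h3]
    omega
  have hed : (∑ i, (cntB m (x i) - τ i)) = ∑ i, (τ i - cntB m (x i)) := by
    have h1 : ∀ i ∈ Finset.univ,
        (cntB m (x i) - τ i) + τ i = (τ i - cntB m (x i)) + cntB m (x i) := by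
      intro i _; omega
    have h2 := Finset.sum_congr rfl h1
    rw [Finset.sum_add_distrib, Finset.sum_add_distrib, hτsum, ← hℓn] at h2
    omega
  have hOnes : ∀ i, (Finset.univ.filter (fun j => x i j = true)).card = cntB m (x i) := by
    intro i; rw [Finset.card_filter]; rfl
  have hZeros : ∀ i, (Finset.univ.filter (fun j => x i j = false)).card = m - cntB m (x i) := by
    intro i
    have h1 : (Finset.univ.filter (fun j => x i j = true)).card
        + (Finset.univ.filter (fun j => x i j = false)).card = m := by
      rw [Finset.card_filter, Finset.card_filter, ← Finset.sum_add_distrib]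
      have hterm : ∀ j ∈ Finset.univ,
          ((if x i j = true then 1 else 0) + (if x i j = false then 1 else 0)) = 1 := by
        intro j _; cases hx : x i j <;> simp [hx]
      rw [Finset.sum_congr rfl hterm]
      simp
    have h2 := hOnes i
    have h3 := cntB_le m (x i)
    omega
  have hPex : ∀ i, ∃ s ⊆ Finset.univ.filter (fun j => x i j = true),
      s.card = cntB m (x i) - τ i := by
    intro i
    apply Finset.exists_subset_card_eq
    rw [hOnes i]
    omega
  choose P hPsub hPcard using hPex
  have hRex : ∀ i, ∃ s ⊆ Finset.univ.filter (fun j => x i j = false),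
      s.card = τ i - cntB m (x i) := by
    intro i
    apply Finset.exists_subset_card_eq
    rw [hZeros i]
    have := hτm i
    omega
  choose R hRsub hRcard using hRex
  set A := Finset.univ.sigma (fun i : Fin K => P i) with hA
  set B := Finset.univ.sigma (fun i : Fin K => R i) with hB
  have hABcard : A.card = B.card := by
    rw [hA, hB, Finset.card_sigma, Finset.card_sigma]
    simp only [hPcard, hRcard]
    exact hed
  have hAmem : ∀ s : {s // s ∈ A}, x s.1.1 s.1.2 = true ∧ 1 ≤ cntB m (x s.1.1) - τ s.1.1 := by
    intro s
    have hs : ↑s ∈ Finset.univ.sigma (fun i : Fin K => P i) := by rw [← hA]; exact s.2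
    rw [Finset.mem_sigma] at hs
    obtain ⟨-, hs2⟩ := hs
    constructor
    · have h1 := hPsub s.1.1 hs2
      exact (Finset.mem_filter.mp h1).2
    · have h1 : 0 < (P s.1.1).card := Finset.card_pos.mpr ⟨_, hs2⟩
      rw [hPcard] at h1
      omega
  have hBmem : ∀ u : {u // u ∈ B}, x u.1.1 u.1.2 = false ∧ 1 ≤ τ u.1.1 - cntB m (x u.1.1) := by
    intro u
    have hu : ↑u ∈ Finset.univ.sigma (fun i : Fin K => R i) := by rw [← hB]; exact u.2
    rw [Finset.mem_sigma] at hu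
    obtain ⟨-, hu2⟩ := hu
    constructor
    · have h1 := hRsub u.1.1 hu2
      exact (Finset.mem_filter.mp h1).2
    · have h1 : 0 < (R u.1.1).card := Finset.card_pos.mpr ⟨_, hu2⟩
      rw [hRcard] at h1
      omega
  have hkey : ∀ (s : {s // s ∈ A}) (u : {u // u ∈ B}),
      s.1.1 ≠ u.1.1 ∧ cntB m (x u.1.1) + 1 ≤ cntB m (x s.1.1) := by
    intro s u
    have h1 := (hAmem s).2
    have h2 := (hBmem u).2
    have h3 := hτq s.1.1
    have h4 := hτq u.1.1
    constructor
    · intro hcon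
      rw [hcon] at h1
      omega
    · omega
  let en : {s // s ∈ A} ≃ Fin A.card := A.equivFin
  let σ : {s // s ∈ A} ≃ {u // u ∈ B} := Finset.equivOfCardEq hABcard
  set Y : Fin A.card → (Fin K → Fin m → Bool) := fun i0 =>
    swapSol K m x (en.symm i0).1.1 (en.symm i0).1.2
      (σ (en.symm i0)).1.1 (σ (en.symm i0)).1.2 with hY
  have hYdef : ∀ i0, Y i0 = swapSol K m x (en.symm i0).1.1 (en.symm i0).1.2
      (σ (en.symm i0)).1.1 (σ (en.symm i0)).1.2 := fun _ => rfl
  refine ⟨A.card, Y, ?_, ?_, ?_, ?_⟩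
  · -- injectivity
    intro i1 i2 hEq
    by_contra hne
    have hsne : en.symm i1 ≠ en.symm i2 := fun h => hne (by
      have := congrArg en h
      simpa using this)
    set s1 := en.symm i1 with hs1
    set s2 := en.symm i2 with hs2
    have hpos : ¬ (s1.1.1 = s2.1.1 ∧ s1.1.2 = s2.1.2) := by
      rintro ⟨h1, h2⟩
      apply hsne
      apply Subtype.ext
      exact Sigma.ext h1 (heq_of_eq h2)
    have hv1 : Y i1 s1.1.1 s1.1.2 = false := by
      rw [hYdef i1, ← hs1]
      exact swap_at_down
    have hv2 : Y i2 s1.1.1 s1.1.2 = true := by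
      rw [hYdef i2, ← hs2]
      have hnotup : ¬ (s1.1.1 = (σ s2).1.1 ∧ s1.1.2 = (σ s2).1.2) := by
        rintro ⟨ha, hb⟩
        have h1 := (hAmem s1).1
        rw [ha, hb, (hBmem (σ s2)).1] at h1
        exact Bool.noConfusion h1
      rw [swap_eval_other hpos hnotup]
      exact (hAmem s1).1
    rw [hEq] at hv1
    rw [hv1] at hv2
    exact Bool.noConfusion hv2
  · -- numOnes and hdist
    intro i0
    have hk := hkey (en.symm i0) (σ (en.symm i0))
    have hxp := (hAmem (en.symm i0)).1
    have hxr := (hBmem (σ (en.symm i0))).1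
    rw [hYdef i0]
    exact ⟨numOnes_swap hk.1 hxp hxr, hdist_swap hk.1 hxp hxr⟩
  · -- cova ≤
    intro i0
    have hk := hkey (en.symm i0) (σ (en.symm i0))
    have hxp := (hAmem (en.symm i0)).1
    have hxr := (hBmem (σ (en.symm i0))).1
    rw [hYdef i0, cova_swap c hk.1 hxp hxr]
    have hcast : (cntB m (x (σ (en.symm i0)).1.1) : ℝ) + 1
        ≤ (cntB m (x (en.symm i0).1.1) : ℝ) := by exact_mod_cast hk.2
    nlinarith
  · -- the sum inequality
    have hper : ∀ i0, cova K m c x - cova K m c (Y i0)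
        = 2 * c * ((cntB m (x (en.symm i0).1.1) : ℝ) - 1
            - (cntB m (x (σ (en.symm i0)).1.1) : ℝ)) := by
      intro i0
      have hk := hkey (en.symm i0) (σ (en.symm i0))
      have hxp := (hAmem (en.symm i0)).1
      have hxr := (hBmem (σ (en.symm i0))).1
      rw [hYdef i0, cova_swap c hk.1 hxp hxr]
      ring
    have hsum1 : (∑ i0, (cova K m c x - cova K m c (Y i0)))
        = ∑ s : {s // s ∈ A}, (2 * c * ((cntB m (x s.1.1) : ℝ) - 1
            - (cntB m (x (σ s).1.1) : ℝ))) := by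
      rw [Finset.sum_congr rfl (fun i0 _ => hper i0)]
      exact Equiv.sum_comp en.symm
        (fun s : {s // s ∈ A} => 2 * c * ((cntB m (x s.1.1) : ℝ) - 1
            - (cntB m (x (σ s).1.1) : ℝ)))
    have hsum2 : (∑ s : {s // s ∈ A}, (2 * c * ((cntB m (x s.1.1) : ℝ) - 1
            - (cntB m (x (σ s).1.1) : ℝ))))
        = 2 * c * ((∑ s : {s // s ∈ A}, ((cntB m (x s.1.1) : ℝ) - 1))
            - ∑ u : {u // u ∈ B}, (cntB m (x u.1.1) : ℝ)) := by
      rw [← Equiv.sum_comp σ (fun u : {u // u ∈ B} => (cntB m (x u.1.1) : ℝ))]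
      rw [← Finset.sum_sub_distrib, Finset.mul_sum]
    have hsA : (∑ s : {s // s ∈ A}, ((cntB m (x s.1.1) : ℝ) - 1))
        = ∑ i, ((cntB m (x i) - τ i : ℕ) : ℝ) * ((cntB m (x i) : ℝ) - 1) := by
      rw [Finset.sum_coe_sort A (fun z : (_ : Fin K) × Fin m => (cntB m (x z.1) : ℝ) - 1)]
      rw [hA, Finset.sum_sigma]
      apply Finset.sum_congr rfl
      intro i _
      dsimp only
      rw [Finset.sum_const, hPcard i, nsmul_eq_mul]
    have hsB : (∑ u : {u // u ∈ B}, (cntB m (x u.1.1) : ℝ))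
        = ∑ i, ((τ i - cntB m (x i) : ℕ) : ℝ) * (cntB m (x i) : ℝ) := by
      rw [Finset.sum_coe_sort B (fun z : (_ : Fin K) × Fin m => (cntB m (x z.1) : ℝ))]
      rw [hB, Finset.sum_sigma]
      apply Finset.sum_congr rfl
      intro i _
      dsimp only
      rw [Finset.sum_const, hRcard i, nsmul_eq_mul]
    have hcova : cova K m c x = c * ∑ i, ((cntB m (x i) : ℝ)^2 - (cntB m (x i) : ℝ)) :=
      cova_eq K m c x
    have hτT : (∑ i, τ i * (τ i - 1)) = (K - t) * (q0 * (q0 - 1)) + t * ((q0 + 1) * q0) := by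
      rw [← Finset.sum_filter_add_sum_filter_not Finset.univ (· ∈ T) (fun i => τ i * (τ i - 1))]
      have hf1 : Finset.univ.filter (· ∈ T) = T := by
        rw [Finset.filter_mem_eq_inter, Finset.univ_inter]
      have hf2 : (Finset.univ.filter (fun i => ¬ i ∈ T)).card = K - t := by
        rw [Finset.filter_not, Finset.card_sdiff_of_subset (by rw [hf1]; exact hTsub)]
        rw [hf1, hTcard]
        simp
      have hc1 : ∀ i ∈ T, τ i * (τ i - 1) = (q0 + 1) * q0 := by
        intro i hi; rw [hτdef i]; simp [hi]
      have hc2 : ∀ i ∈ Finset.univ.filter (fun i => ¬ i ∈ T), τ i * (τ i - 1) = q0 * (q0 - 1) := by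
        intro i hi
        rw [Finset.mem_filter] at hi
        rw [hτdef i]; simp [hi.2]
      rw [hf1, Finset.sum_congr rfl hc1,
        Finset.sum_congr rfl hc2, Finset.sum_const, Finset.sum_const, hTcard, hf2,
        smul_eq_mul, smul_eq_mul]
      ring
    have hbal : balCov K c ℓ = c * ((∑ i, τ i * (τ i - 1) : ℕ) : ℝ) := by
      have hmod : ℓ - ℓ / K * K = t := by
        have hcomm : ℓ / K * K = K * q0 := by rw [← hq0]; ring
        omega
      unfold balCov
      rw [hmod, ← hq0, hτT]
    have hmain : (∑ i, ((cntB m (x i) : ℝ)^2 - (cntB m (x i) : ℝ)))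
          - ((∑ i, τ i * (τ i - 1) : ℕ) : ℝ)
        ≤ 2 * ((∑ i, ((cntB m (x i) - τ i : ℕ) : ℝ) * ((cntB m (x i) : ℝ) - 1))
            - ∑ i, ((τ i - cntB m (x i) : ℕ) : ℝ) * (cntB m (x i) : ℝ)) := by
      rw [Nat.cast_sum, ← Finset.sum_sub_distrib, ← Finset.sum_sub_distrib, Finset.mul_sum]
      apply Finset.sum_le_sum
      intro i _
      have := group_ineq (cntB m (x i)) (τ i)
      linarith
    rw [hsum1, hsum2, hsA, hsB, hcova, hbal]
    set S1 := ∑ i, ((cntB m (x i) : ℝ)^2 - (cntB m (x i) : ℝ))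
    set S2 := ((∑ i, τ i * (τ i - 1) : ℕ) : ℝ)
    set SA := ∑ i, ((cntB m (x i) - τ i : ℕ) : ℝ) * ((cntB m (x i) : ℝ) - 1)
    set SB := ∑ i, ((τ i - cntB m (x i) : ℕ) : ℝ) * (cntB m (x i) : ℝ)
    have h := mul_le_mul_of_nonneg_left hmain hc.le
    calc c * S1 - c * S2 = c * (S1 - S2) := by ring
      _ ≤ c * (2 * (SA - SB)) := h
      _ = 2 * c * (SA - SB) := by ring
end

section
/- Consider RLS on the chance-constrained knapsack problem with correlated uniform weights, for any group structure K, m ≥ 1 (n = K·m), any profits p_{ij} ≥ 0, any parameters a, d, c > 0, B > 0 and 0 < α < 1. For every initial solution x₀ ∈ {0,1}^n, the expected number of iterations until the current solution is feasible for the first time is at most 2n·Σ_{k=1}^n 1/k; in particular it is O(n log n). -/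
open Finset
open scoped ENNReal

/-- abstract beta-prime -/
noncomputable def bpF (B V E : ℝ) : ℝ := if E < B then V / (V + (B - E) ^ 2) else 1 + E - B

lemma bpF_mono {B V W E F : ℝ} (hV0 : 0 ≤ V) (hVW : V ≤ W) (hEF : E ≤ F) :
    bpF B V E ≤ bpF B W F := by
  unfold bpF
  by_cases hF : F < B
  · have hE : E < B := lt_of_le_of_lt hEF hF
    rw [if_pos hF, if_pos hE]
    rw [div_le_div_iff₀ (by nlinarith) (by nlinarith)]
    have hDf : (B - F) ^ 2 ≤ (B - E) ^ 2 := by nlinarith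
    nlinarith [mul_le_mul_of_nonneg_left hDf hV0,
      mul_le_mul_of_nonneg_right hVW (sq_nonneg (B - E))]
  · rw [if_neg hF]
    by_cases hE : E < B
    · rw [if_pos hE]
      have h1 : V / (V + (B - E) ^ 2) ≤ 1 := by
        rw [div_le_one (by nlinarith)]; nlinarith
      have : (1:ℝ) ≤ 1 + F - B := by push_neg at hF; linarith
      linarith
    · rw [if_neg hE]; linarith

lemma bpF_strict {B V W E F : ℝ} (hV0 : 0 ≤ V) (hVW : V < W) (hEF : E < F) :
    bpF B V E < bpF B W F := by
  unfold bpF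
  by_cases hF : F < B
  · have hE : E < B := lt_trans hEF hF
    rw [if_pos hF, if_pos hE]
    rw [div_lt_div_iff₀ (by nlinarith) (by nlinarith)]
    have hDe : (0:ℝ) < (B - E) ^ 2 := by nlinarith
    have hDf : (B - F) ^ 2 < (B - E) ^ 2 := by nlinarith
    nlinarith [mul_le_mul_of_nonneg_left (le_of_lt hDf) hV0,
      mul_lt_mul_of_pos_right hVW hDe]
  · rw [if_neg hF]
    by_cases hE : E < B
    · rw [if_pos hE]
      have h1 : V / (V + (B - E) ^ 2) < 1 := by
        rw [div_lt_one (by nlinarith)]; nlinarith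
      have : (1:ℝ) ≤ 1 + F - B := by push_neg at hF; linarith
      linarith
    · rw [if_neg hE]; linarith

section Aux
variable {K m : ℕ}

open scoped Classical

/-- set of one positions -/
noncomputable def onesF (x : Fin K → Fin m → Bool) : Finset (Fin K × Fin m) :=
  univ.filter (fun p => x p.1 p.2 = true)

noncomputable def diffsF (x y : Fin K → Fin m → Bool) : Finset (Fin K × Fin m) :=
  univ.filter (fun p => ¬ (x p.1 p.2 = y p.1 p.2))

lemma numOnes_eq_card (x : Fin K → Fin m → Bool) : numOnes K m x = (onesF x).card := by
  rw [onesF, Finset.card_filter]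
  rw [Fintype.sum_prod_type]
  simp [numOnes]

lemma hdist_eq_card (x y : Fin K → Fin m → Bool) : hdist K m x y = (diffsF x y).card := by
  rw [diffsF, Finset.card_filter, Fintype.sum_prod_type]
  simp only [hdist]
  congr 1; ext i; congr 1; ext j
  by_cases h : x i j = y i j <;> simp [h]

lemma diffsF_eq_union (x y : Fin K → Fin m → Bool) :
    diffsF x y = (onesF y \ onesF x) ∪ (onesF x \ onesF y) := by
  ext p
  simp only [diffsF, onesF, mem_filter, mem_union, mem_sdiff, mem_univ, true_and]
  cases hx : x p.1 p.2 <;> cases hy : y p.1 p.2 <;> simp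

lemma card_ones_rel (x y : Fin K → Fin m → Bool) :
    (onesF y).card + (onesF x \ onesF y).card = (onesF x).card + (onesF y \ onesF x).card := by
  have h1 := Finset.card_sdiff_add_card_inter (onesF y) (onesF x)
  have h2 := Finset.card_sdiff_add_card_inter (onesF x) (onesF y)
  rw [Finset.inter_comm] at h1
  omega

/-- From hdist ≤ 2 and more ones, x ≤ y pointwise. -/
lemma pointwise_of_hdist_le_two (x y : Fin K → Fin m → Bool)
    (hd2 : hdist K m x y ≤ 2) (hlt : numOnes K m x < numOnes K m y) :
    ∀ i j, x i j = true → y i j = true := by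
  have hcard := card_ones_rel x y
  rw [hdist_eq_card, diffsF_eq_union] at hd2
  rw [numOnes_eq_card, numOnes_eq_card] at hlt
  have hun : ((onesF y \ onesF x) ∪ (onesF x \ onesF y)).card
      = (onesF y \ onesF x).card + (onesF x \ onesF y).card := by
    apply Finset.card_union_of_disjoint
    exact disjoint_sdiff_sdiff
  have hD : (onesF x \ onesF y).card = 0 := by omega
  have hDe : onesF x \ onesF y = ∅ := Finset.card_eq_zero.mp hD
  have hsub : onesF x ⊆ onesF y := by
    intro p hp
    by_contra hpy
    have : p ∈ onesF x \ onesF y := Finset.mem_sdiff.mpr ⟨hp, hpy⟩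
    simp [hDe] at this
  intro i j hxij
  have : (i, j) ∈ onesF x := by simp [onesF, hxij]
  have := hsub this
  simpa [onesF] using this

end Aux

section Aux2
variable {K m : ℕ} {a d c B α : ℝ} {profit : Fin K → Fin m → ℝ}

lemma cova_nonneg (hc : 0 ≤ c) (x : Fin K → Fin m → Bool) : 0 ≤ cova K m c x := by
  unfold cova
  apply mul_nonneg (by linarith)
  apply Finset.sum_nonneg; intro i _
  apply Finset.sum_nonneg; intro p _
  split_ifs <;> norm_num

lemma cova_mono (hc : 0 ≤ c) {x y : Fin K → Fin m → Bool}
    (hxy : ∀ i j, x i j = true → y i j = true) : cova K m c x ≤ cova K m c y := by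
  unfold cova
  apply mul_le_mul_of_nonneg_left _ (by linarith)
  apply Finset.sum_le_sum; intro i _
  apply Finset.sum_le_sum; intro p _
  have h1 := hxy i p.1; have h2 := hxy i p.2
  by_cases hx1 : x i p.1 = true <;> by_cases hx2 : x i p.2 = true <;>
    simp_all <;> split_ifs <;> norm_num

lemma numOnes_mono {x y : Fin K → Fin m → Bool}
    (hxy : ∀ i j, x i j = true → y i j = true) : numOnes K m x ≤ numOnes K m y := by
  classical
  rw [numOnes_eq_card, numOnes_eq_card]
  apply Finset.card_le_card
  intro p hp
  simp only [onesF, Finset.mem_filter, Finset.mem_univ, true_and] at *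
  exact hxy p.1 p.2 hp

lemma varWeight_nonneg (hd : 0 ≤ d) (hc : 0 ≤ c) (x : Fin K → Fin m → Bool) :
    0 ≤ varWeight K m d c x := by
  unfold varWeight
  have := cova_nonneg (K := K) (m := m) hc x
  positivity

lemma betaPrime_eq_bpF (x : Fin K → Fin m → Bool) :
    betaPrime K m a d c B x = bpF B (varWeight K m d c x) (expWeight K m a x) := rfl

lemma bp_down (ha : 0 < a) (hd : 0 < d) (hc : 0 < c) {x y : Fin K → Fin m → Bool}
    (hxy : ∀ i j, y i j = true → x i j = true) :
    betaPrime K m a d c B y ≤ betaPrime K m a d c B x := by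
  rw [betaPrime_eq_bpF, betaPrime_eq_bpF]
  have hn : numOnes K m y ≤ numOnes K m x := numOnes_mono hxy
  apply bpF_mono (varWeight_nonneg hd.le hc.le y)
  · unfold varWeight
    have := cova_mono (K := K) (m := m) hc.le hxy
    have : d * (numOnes K m y : ℝ) ≤ d * (numOnes K m x : ℝ) := by
      apply mul_le_mul_of_nonneg_left _ hd.le; exact_mod_cast hn
    linarith [cova_mono (K := K) (m := m) hc.le hxy]
  · unfold expWeight
    apply mul_le_mul_of_nonneg_left _ ha.le; exact_mod_cast hn

lemma bp_up (ha : 0 < a) (hd : 0 < d) (hc : 0 < c) {x y : Fin K → Fin m → Bool}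
    (hxy : ∀ i j, x i j = true → y i j = true) (hlt : numOnes K m x < numOnes K m y) :
    betaPrime K m a d c B x < betaPrime K m a d c B y := by
  rw [betaPrime_eq_bpF, betaPrime_eq_bpF]
  have hn : (numOnes K m x : ℝ) < (numOnes K m y : ℝ) := by exact_mod_cast hlt
  apply bpF_strict (varWeight_nonneg hd.le hc.le x)
  · unfold varWeight
    have h1 : d * (numOnes K m x : ℝ) < d * (numOnes K m y : ℝ) :=
      mul_lt_mul_of_pos_left hn hd
    linarith [cova_mono (K := K) (m := m) hc.le hxy]
  · unfold expWeight
    exact mul_lt_mul_of_pos_left hn ha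

lemma alpha_lt_bp (hα1 : α < 1) (hx : ¬ feasible K m a d c B α x) :
    α < betaPrime K m a d c B x := by
  unfold feasible at hx
  unfold betaPrime
  by_cases hE : expWeight K m a x < B
  · rw [if_pos hE]
    push_neg at hx
    exact hx hE
  · rw [if_neg hE]
    push_neg at hE
    linarith

lemma feasible_of_bp_le (hα1 : α < 1) {x : Fin K → Fin m → Bool}
    (h : betaPrime K m a d c B x ≤ α) : feasible K m a d c B α x := by
  unfold betaPrime at h
  by_cases hE : expWeight K m a x < B
  · rw [if_pos hE] at h; exact ⟨hE, h⟩
  · rw [if_neg hE] at h; push_neg at hE; linarith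

lemma profitOf_nonneg (hp : ∀ i j, 0 ≤ profit i j) (x : Fin K → Fin m → Bool) :
    0 ≤ profitOf K m profit x := by
  apply Finset.sum_nonneg; intro i _
  apply Finset.sum_nonneg; intro j _
  split_ifs with h
  · exact hp i j
  · exact le_refl 0

lemma pPrime_eq_neg_one (hα1 : α < 1) (hx : ¬ feasible K m a d c B α x) :
    pPrime K m a d c B α profit x = -1 := by
  unfold pPrime
  rw [if_pos (alpha_lt_bp hα1 hx)]

lemma accept_down (hα1 : α < 1) (hp : ∀ i j, 0 ≤ profit i j)
    {x y : Fin K → Fin m → Bool}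
    (hx : ¬ feasible K m a d c B α x)
    (h : betaPrime K m a d c B y ≤ betaPrime K m a d c B x) :
    fge K m a d c B α profit y x := by
  by_cases hy : α < betaPrime K m a d c B y
  · right
    constructor
    · rw [pPrime_eq_neg_one hα1 hx]; unfold pPrime; rw [if_pos hy]
    · exact h
  · left
    rw [pPrime_eq_neg_one hα1 hx]
    unfold pPrime
    rw [if_neg hy]
    have := profitOf_nonneg hp y
    linarith

lemma reject_up (hα1 : α < 1)
    {x y : Fin K → Fin m → Bool}
    (hx : ¬ feasible K m a d c B α x)
    (h : betaPrime K m a d c B x < betaPrime K m a d c B y) :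
    ¬ fge K m a d c B α profit y x := by
  intro hf
  have hax : α < betaPrime K m a d c B x := alpha_lt_bp hα1 hx
  have hay : α < betaPrime K m a d c B y := lt_trans hax h
  have hpy : pPrime K m a d c B α profit y = -1 := by unfold pPrime; rw [if_pos hay]
  have hpx : pPrime K m a d c B α profit x = -1 := pPrime_eq_neg_one hα1 hx
  rcases hf with h1 | ⟨h1, h2⟩
  · rw [hpx, hpy] at h1; linarith
  · linarith

lemma all_false_of_numOnes_zero {x : Fin K → Fin m → Bool}
    (h : numOnes K m x = 0) : ∀ i j, x i j = false := by
  intro i j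
  unfold numOnes at h
  rw [Finset.sum_eq_zero_iff] at h
  have := h i (Finset.mem_univ i)
  rw [Finset.sum_eq_zero_iff] at this
  have := this j (Finset.mem_univ j)
  by_contra hb
  simp only [Bool.not_eq_false] at hb
  simp [hb] at this

lemma feasible_of_numOnes_zero (hB : 0 < B) (hα0 : 0 ≤ α) {x : Fin K → Fin m → Bool}
    (h : numOnes K m x = 0) : feasible K m a d c B α x := by
  have hf := all_false_of_numOnes_zero h
  have hcov : cova K m c x = 0 := by
    unfold cova
    rw [mul_eq_zero]; right
    apply Finset.sum_eq_zero; intro i _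
    apply Finset.sum_eq_zero; intro p _
    rw [hf i p.1]; norm_num
  have hvar : varWeight K m d c x = 0 := by unfold varWeight; rw [h, hcov]; simp
  have hexp : expWeight K m a x = 0 := by unfold expWeight; rw [h]; simp
  constructor
  · rw [hexp]; exact hB
  · unfold chebBeta
    rw [hvar, hexp]
    simp
    positivity

end Aux2

section Aux3
variable {K m : ℕ}

open scoped Classical

noncomputable def flipDown (x : Fin K → Fin m → Bool) (i : Fin K) (j : Fin m) :
    Fin K → Fin m → Bool :=
  fun i' j' => if i' = i ∧ j' = j then false else x i' j'

lemma flipDown_le (x : Fin K → Fin m → Bool) (i : Fin K) (j : Fin m) :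
    ∀ i' j', flipDown x i j i' j' = true → x i' j' = true := by
  intro i' j' h
  unfold flipDown at h
  split_ifs at h
  exact h

lemma onesF_flipDown (x : Fin K → Fin m → Bool) (i : Fin K) (j : Fin m) :
    onesF (flipDown x i j) = (onesF x).erase (i, j) := by
  ext p
  simp only [onesF, Finset.mem_filter, Finset.mem_univ, true_and,
    Finset.mem_erase]
  simp only [flipDown]
  constructor
  · intro h
    split_ifs at h with hc
    refine ⟨?_, h⟩
    intro he
    apply hc
    constructor
    · exact congrArg Prod.fst he
    · exact congrArg Prod.snd he
  · rintro ⟨hne, hx⟩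
    have hc : ¬ (p.1 = i ∧ p.2 = j) := by
      rintro ⟨h1, h2⟩
      exact hne (Prod.ext h1 h2)
    rw [if_neg hc]
    exact hx

lemma numOnes_flipDown_lt {x : Fin K → Fin m → Bool} {i : Fin K} {j : Fin m}
    (hx : x i j = true) : numOnes K m (flipDown x i j) < numOnes K m x := by
  rw [numOnes_eq_card, numOnes_eq_card, onesF_flipDown]
  have hmem : (i, j) ∈ onesF x := by simp [onesF, hx]
  rw [Finset.card_erase_of_mem hmem]
  have : 0 < (onesF x).card := Finset.card_pos.mpr ⟨(i, j), hmem⟩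
  omega

lemma flipDown_ne {x : Fin K → Fin m → Bool} {i : Fin K} {j : Fin m}
    (hx : x i j = true) : flipDown x i j ≠ x := by
  intro h
  have := congrFun (congrFun h i) j
  simp [flipDown, hx] at this

lemma hdist_flipDown {x : Fin K → Fin m → Bool} {i : Fin K} {j : Fin m}
    (hx : x i j = true) : hdist K m x (flipDown x i j) = 1 := by
  rw [hdist_eq_card]
  have : diffsF x (flipDown x i j) = {(i, j)} := by
    ext p
    simp only [diffsF, Finset.mem_filter, Finset.mem_univ, true_and,
      Finset.mem_singleton]
    simp only [flipDown]
    by_cases hc : p.1 = i ∧ p.2 = j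
    · rw [if_pos hc]
      rcases hc with ⟨h1, h2⟩
      subst h1; subst h2
      simp [hx]
    · rw [if_neg hc]
      constructor
      · intro hne; exact absurd rfl hne
      · intro he
        exact absurd ⟨congrArg Prod.fst he, congrArg Prod.snd he⟩ hc
  rw [this, Finset.card_singleton]

lemma flipDown_injOn {x : Fin K → Fin m → Bool} {p q : Fin K × Fin m}
    (hp : x p.1 p.2 = true) (_hq : x q.1 q.2 = true)
    (h : flipDown x p.1 p.2 = flipDown x q.1 q.2) : p = q := by
  by_contra hpq
  have heval := congrFun (congrFun h p.1) p.2
  have hc : ¬ (p.1 = q.1 ∧ p.2 = q.2) := by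
    rintro ⟨h1, h2⟩
    exact hpq (Prod.ext h1 h2)
  rw [flipDown, flipDown] at heval
  simp only [and_self, if_true, if_pos] at heval
  rw [if_neg hc] at heval
  rw [hp] at heval
  simp at heval

lemma diffsF_inj (x : Fin K → Fin m → Bool) {y y' : Fin K → Fin m → Bool}
    (h : diffsF x y = diffsF x y') : y = y' := by
  funext i j
  have := Finset.ext_iff.mp h (i, j)
  simp only [diffsF, Finset.mem_filter, Finset.mem_univ, true_and] at this
  cases hx : x i j <;> cases hy : y i j <;> cases hy' : y' i j <;> simp_all

end Aux3

section Aux4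
variable {K m : ℕ}

open scoped Classical

lemma sum_stepP_eq (mutD : (Fin K → Fin m → Bool) → (Fin K → Fin m → Bool) → ℝ≥0∞)
    (acc : (Fin K → Fin m → Bool) → (Fin K → Fin m → Bool) → Prop)
    (x : Fin K → Fin m → Bool) :
    ∑ y, stepP K m mutD acc x y = ∑ y, mutD x y := by
  unfold stepP
  rw [Finset.sum_add_distrib]
  have h2 : (∑ y : Fin K → Fin m → Bool, if y = x then
      (∑ z, if acc z x then 0 else mutD x z) else 0)
      = ∑ z, if acc z x then 0 else mutD x z := by
    rw [Finset.sum_ite_eq' Finset.univ x (fun _ => ∑ z, if acc z x then 0 else mutD x z)]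
    simp
  rw [h2, ← Finset.sum_add_distrib]
  apply Finset.sum_congr rfl
  intro y _
  split_ifs <;> simp

lemma two_mul_choose_two (n : ℕ) : 2 * n.choose 2 = n * (n - 1) := by
  induction n with
  | zero => rfl
  | succ k ih =>
    rw [Nat.choose_succ_succ, Nat.choose_one_right, Nat.mul_add, ih, Nat.succ_sub_one]
    cases k with
    | zero => rfl
    | succ j => simp [Nat.succ_sub_one]; ring

lemma sum_mutRLS_le_one (hK : 1 ≤ K) (hm : 1 ≤ m) (x : Fin K → Fin m → Bool) :
    ∑ y, mutRLS K m x y ≤ 1 := by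
  set n := K * m with hn
  have hn1 : 1 ≤ n := Nat.one_le_iff_ne_zero.mpr (by positivity)
  have hNcast : (K : ℝ≥0∞) * (m : ℝ≥0∞) = (n : ℝ≥0∞) := by
    rw [hn]; push_cast; ring
  -- mutation probability as a function of the diff-set
  set w : Finset (Fin K × Fin m) → ℝ≥0∞ := fun s =>
    if s.card = 1 then 1 / (2 * (n : ℝ≥0∞))
    else if s.card = 2 then 1 / ((n : ℝ≥0∞) * ((n : ℝ≥0∞) - 1)) else 0 with hw
  have hmut : ∀ y, mutRLS K m x y = w (diffsF x y) := by
    intro y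
    rw [mutRLS, hdist_eq_card, hw, hNcast]
  calc ∑ y, mutRLS K m x y = ∑ y, w (diffsF x y) := by
        apply Finset.sum_congr rfl; intro y _; exact hmut y
    _ = ∑ s ∈ Finset.univ.image (fun y => diffsF x y), w s := by
        rw [Finset.sum_image]
        intro y _ y' _ h
        exact diffsF_inj x h
    _ ≤ ∑ s : Finset (Fin K × Fin m), w s := by
        apply Finset.sum_le_sum_of_subset (Finset.subset_univ _)
    _ ≤ 1 := by
        rw [← Finset.sum_filter_add_sum_filter_not Finset.univ (fun s => s.card = 1)]
        have hcard1 : (Finset.univ.filter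
            (fun s : Finset (Fin K × Fin m) => s.card = 1)).card = n := by
          have : Finset.univ.filter (fun s : Finset (Fin K × Fin m) => s.card = 1)
              = Finset.univ.powersetCard 1 := by
            rw [Finset.powersetCard_eq_filter, Finset.powerset_univ]
          rw [this, Finset.card_powersetCard, Finset.card_univ]
          simp [Fintype.card_prod, hn]
        have hp1 : ∑ s ∈ Finset.univ.filter (fun s : Finset (Fin K × Fin m) => s.card = 1),
            w s = (n : ℝ≥0∞) * (1 / (2 * (n : ℝ≥0∞))) := by
          have hcongr : ∀ s ∈ Finset.univ.filter
              (fun s : Finset (Fin K × Fin m) => s.card = 1),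
              w s = 1 / (2 * (n : ℝ≥0∞)) := by
            intro s hs
            have hc := (Finset.mem_filter.mp hs).2
            simp [hw, hc]
          rw [Finset.sum_congr rfl hcongr, Finset.sum_const, nsmul_eq_mul, hcard1]
        have hp2 : ∑ s ∈ Finset.univ.filter
            (fun s : Finset (Fin K × Fin m) => ¬ s.card = 1), w s
            ≤ (n.choose 2 : ℝ≥0∞) * (1 / ((n : ℝ≥0∞) * ((n : ℝ≥0∞) - 1))) := by
          have hsub : ∀ s ∈ Finset.univ.filter
              (fun s : Finset (Fin K × Fin m) => ¬ s.card = 1),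
              w s = if s.card = 2 then 1 / ((n : ℝ≥0∞) * ((n : ℝ≥0∞) - 1)) else 0 := by
            intro s hs
            have hc := (Finset.mem_filter.mp hs).2
            simp only [hw, hc, if_false]
          rw [Finset.sum_congr rfl hsub, Finset.sum_ite, Finset.sum_const_zero, add_zero,
            Finset.sum_const, nsmul_eq_mul]
          apply mul_le_mul_left
          norm_cast
          have : (Finset.univ.filter (fun s : Finset (Fin K × Fin m) => ¬ s.card = 1)).filter
              (fun s => s.card = 2) ⊆ Finset.univ.powersetCard 2 := by
            intro s hs
            rw [Finset.powersetCard_eq_filter, Finset.powerset_univ]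
            simp only [Finset.mem_filter, Finset.mem_univ, true_and] at *
            exact hs.2
          calc ((Finset.univ.filter (fun s : Finset (Fin K × Fin m) => ¬ s.card = 1)).filter
              (fun s => s.card = 2)).card ≤ (Finset.univ.powersetCard 2).card :=
                Finset.card_le_card this
            _ = n.choose 2 := by
                rw [Finset.card_powersetCard, Finset.card_univ]
                simp [Fintype.card_prod, hn]
        have hN0 : (n : ℝ≥0∞) ≠ 0 := by exact_mod_cast Nat.one_le_iff_ne_zero.mp hn1
        have hNtop : (n : ℝ≥0∞) ≠ ∞ := ENNReal.natCast_ne_top n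
        have harith1 : (n : ℝ≥0∞) * (1 / (2 * (n : ℝ≥0∞))) = 1 / 2 := by
          rw [one_div, ENNReal.mul_inv (Or.inr hNtop) (Or.inr hN0)]
          rw [← mul_assoc, mul_comm (n : ℝ≥0∞) (2 : ℝ≥0∞)⁻¹, mul_assoc,
            ENNReal.mul_inv_cancel hN0 hNtop, mul_one, one_div]
        have harith2 : (n.choose 2 : ℝ≥0∞) * (1 / ((n : ℝ≥0∞) * ((n : ℝ≥0∞) - 1))) ≤ 1 / 2 := by
          rcases Nat.lt_or_ge n 2 with h2 | h2
          · have : n.choose 2 = 0 := by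
              apply Nat.choose_eq_zero_of_lt h2
            rw [this]
            simp
          · have hCpos : n.choose 2 ≠ 0 := by
              have := Nat.choose_pos (n := n) (k := 2) h2
              omega
            have hsub : ((n : ℝ≥0∞) - 1) = ((n - 1 : ℕ) : ℝ≥0∞) := by
              rw [ENNReal.natCast_sub]; simp
            rw [hsub, ← Nat.cast_mul, ← two_mul_choose_two]
            have hC0 : ((n.choose 2 : ℕ) : ℝ≥0∞) ≠ 0 := by exact_mod_cast hCpos
            have hCtop : ((n.choose 2 : ℕ) : ℝ≥0∞) ≠ ∞ := ENNReal.natCast_ne_top _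
            push_cast
            rw [one_div, ENNReal.mul_inv (Or.inr hCtop) (Or.inr hC0)]
            rw [← mul_assoc, mul_comm ((n.choose 2 : ℕ) : ℝ≥0∞) (2 : ℝ≥0∞)⁻¹, mul_assoc,
              ENNReal.mul_inv_cancel hC0 hCtop, mul_one, one_div]
        calc _ ≤ (1 : ℝ≥0∞) / 2 + 1 / 2 := by
              rw [hp1]
              exact add_le_add harith1.le (le_trans hp2 harith2)
          _ = 1 := ENNReal.add_halves 1

section Aux5
variable {K m : ℕ}

open scoped Classical

noncomputable def gfun (n ℓ : ℕ) : ℝ≥0∞ :=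
  ((2 * n - 1 : ℕ) : ℝ≥0∞) + ∑ k ∈ Finset.Icc 2 ℓ, ((2 * n : ℕ) : ℝ≥0∞) / (k : ℝ≥0∞)

lemma gfun_mono (n : ℕ) {ℓ ℓ' : ℕ} (h : ℓ ≤ ℓ') : gfun n ℓ ≤ gfun n ℓ' := by
  unfold gfun
  apply add_le_add_right
  apply Finset.sum_le_sum_of_subset
  exact Finset.Icc_subset_Icc_right h

lemma gfun_succ (n : ℕ) {ℓ : ℕ} (h : 2 ≤ ℓ) :
    gfun n ℓ = gfun n (ℓ - 1) + ((2 * n : ℕ) : ℝ≥0∞) / (ℓ : ℝ≥0∞) := by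
  obtain ⟨j, rfl⟩ : ∃ j, ℓ = j + 1 := ⟨ℓ - 1, by omega⟩
  unfold gfun
  rw [Finset.sum_Icc_succ_top (by omega : 2 ≤ j + 1)]
  simp only [Nat.add_sub_cancel]
  ring

lemma hitVec_eq_zero_of_mem {P : (Fin K → Fin m → Bool) → (Fin K → Fin m → Bool) → ℝ≥0∞}
    {A : (Fin K → Fin m → Bool) → Prop} {x₀ : Fin K → Fin m → Bool}
    (t : ℕ) {x : Fin K → Fin m → Bool} (hA : A x) : hitVec K m P A x₀ t x = 0 := by
  cases t <;> simp [hitVec, hA]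

set_option maxHeartbeats 1000000 in
lemma hit_le_drift (P : (Fin K → Fin m → Bool) → (Fin K → Fin m → Bool) → ℝ≥0∞)
    (A : (Fin K → Fin m → Bool) → Prop) (G : (Fin K → Fin m → Bool) → ℝ≥0∞)
    (hstep : ∀ x, ¬ A x →
      (∑ y ∈ Finset.univ.filter (fun y => ¬ A y), P x y * (G y + 1)) ≤ G x)
    (x₀ : Fin K → Fin m → Bool) :
    expHitTime K m P A x₀ ≤ 1 + G x₀ := by
  set hv := hitVec K m P A x₀ with hhv
  have key : ∀ t, (∑ y, hv (t+1) y * G y) + (∑ y, hv (t+1) y)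
      ≤ ∑ y, hv t y * G y := by
    intro t
    have h1 : (∑ y, hv (t+1) y * G y) + (∑ y, hv (t+1) y)
        = ∑ y, hv (t+1) y * (G y + 1) := by
      rw [← Finset.sum_add_distrib]
      apply Finset.sum_congr rfl
      intro y _
      rw [mul_add, mul_one]
    rw [h1]
    have h2 : ∑ y, hv (t+1) y * (G y + 1)
        = ∑ y ∈ Finset.univ.filter (fun y => ¬ A y), hv (t+1) y * (G y + 1) := by
      rw [← Finset.sum_filter_add_sum_filter_not Finset.univ (fun y => ¬ A y)]
      have : ∑ y ∈ Finset.univ.filter (fun y => ¬ ¬ A y), hv (t+1) y * (G y + 1) = 0 := by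
        apply Finset.sum_eq_zero
        intro y hy
        have hAy : A y := not_not.mp (Finset.mem_filter.mp hy).2
        rw [hhv, hitVec_eq_zero_of_mem _ hAy, zero_mul]
      rw [this, add_zero]
    rw [h2]
    have h3 : ∀ y ∈ Finset.univ.filter (fun y => ¬ A y),
        hv (t+1) y * (G y + 1) = (∑ x, hv t x * P x y) * (G y + 1) := by
      intro y hy
      have hAy : ¬ A y := (Finset.mem_filter.mp hy).2
      rw [hhv]
      simp only [hitVec, if_neg hAy]
    rw [Finset.sum_congr rfl h3]
    have h4 : ∑ y ∈ Finset.univ.filter (fun y => ¬ A y), (∑ x, hv t x * P x y) * (G y + 1)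
        = ∑ x, hv t x * (∑ y ∈ Finset.univ.filter (fun y => ¬ A y), P x y * (G y + 1)) := by
      have hstep1 : ∀ y ∈ Finset.univ.filter (fun y => ¬ A y),
          (∑ x, hv t x * P x y) * (G y + 1) = ∑ x, hv t x * (P x y * (G y + 1)) := by
        intro y _
        rw [Finset.sum_mul]
        apply Finset.sum_congr rfl
        intro x _
        ring
      rw [Finset.sum_congr rfl hstep1, Finset.sum_comm]
      apply Finset.sum_congr rfl
      intro x _
      rw [Finset.mul_sum]
    rw [h4]
    apply Finset.sum_le_sum
    intro x _
    by_cases hAx : A x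
    · rw [hhv, hitVec_eq_zero_of_mem _ hAx, zero_mul, zero_mul]
    · exact mul_le_mul_right (hstep x hAx) _
  -- telescoping
  have tel : ∀ N : ℕ, (∑ y, hv N y * G y) + (∑ t ∈ Finset.range N, ∑ y, hv (t+1) y)
      ≤ ∑ y, hv 0 y * G y := by
    intro N
    induction N with
    | zero => simp
    | succ M ih =>
      rw [Finset.sum_range_succ]
      calc (∑ y, hv (M+1) y * G y) + ((∑ t ∈ Finset.range M, ∑ y, hv (t+1) y)
            + (∑ y, hv (M+1) y))
          = ((∑ y, hv (M+1) y * G y) + (∑ y, hv (M+1) y))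
            + (∑ t ∈ Finset.range M, ∑ y, hv (t+1) y) := by ring
        _ ≤ (∑ y, hv M y * G y) + (∑ t ∈ Finset.range M, ∑ y, hv (t+1) y) :=
            add_le_add_left (key M) _
        _ ≤ _ := ih
  have hv0 : ∀ y, hv 0 y = if y = x₀ ∧ ¬ A y then 1 else 0 := by
    intro y; rw [hhv]; rfl
  have hu0 : (∑ y, hv 0 y) ≤ 1 := by
    have : ∀ y, hv 0 y ≤ if y = x₀ then 1 else 0 := by
      intro y
      rw [hv0]
      split_ifs <;> simp_all
    calc (∑ y, hv 0 y) ≤ ∑ y, if y = x₀ then 1 else 0 := Finset.sum_le_sum fun y _ => this y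
      _ = 1 := by rw [Finset.sum_ite_eq' Finset.univ x₀ (fun _ => (1:ℝ≥0∞))]; simp
  have hv0G : (∑ y, hv 0 y * G y) ≤ G x₀ := by
    have : ∀ y, hv 0 y * G y ≤ if y = x₀ then G x₀ else 0 := by
      intro y
      rw [hv0]
      by_cases h1 : y = x₀ ∧ ¬ A y
      · rw [if_pos h1, one_mul, if_pos h1.1, h1.1]
      · rw [if_neg h1, zero_mul]
        split_ifs <;> simp
    calc (∑ y, hv 0 y * G y) ≤ ∑ y, if y = x₀ then G x₀ else 0 :=
          Finset.sum_le_sum fun y _ => this y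
      _ = G x₀ := by rw [Finset.sum_ite_eq' Finset.univ x₀ (fun _ => G x₀)]; simp
  -- conclude
  rw [expHitTime, ENNReal.tsum_eq_iSup_sum]
  apply iSup_le
  intro s
  obtain ⟨N, hN⟩ := Finset.exists_nat_subset_range s
  have hmono : ∑ t ∈ s, ∑ y, hv t y ≤ ∑ t ∈ Finset.range (N+1), ∑ y, hv t y :=
    Finset.sum_le_sum_of_subset (le_trans hN (Finset.range_subset_range.mpr (by omega)))
  calc ∑ t ∈ s, ∑ y, hv t y ≤ ∑ t ∈ Finset.range (N+1), ∑ y, hv t y := hmono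
    _ = (∑ t ∈ Finset.range N, ∑ y, hv (t+1) y) + ∑ y, hv 0 y :=
        Finset.sum_range_succ' _ N
    _ ≤ (∑ y, hv 0 y * G y) + 1 :=
        add_le_add (le_trans (le_add_self) (tel N)) hu0
    _ ≤ 1 + G x₀ := by rw [add_comm]; exact add_le_add le_rfl hv0G

end Aux5

section Aux6
open scoped Classical

lemma numOnes_le (K m : ℕ) (x : Fin K → Fin m → Bool) : numOnes K m x ≤ K * m := by
  rw [numOnes_eq_card]
  calc (onesF x).card ≤ (Finset.univ : Finset (Fin K × Fin m)).card := Finset.card_le_univ _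
    _ = K * m := by simp [Finset.card_univ]

set_option maxHeartbeats 1000000 in
lemma main_drift {K m : ℕ} (hK : 1 ≤ K) (hm : 1 ≤ m) {a d c B α : ℝ}
    (ha : 0 < a) (hd : 0 < d) (hc : 0 < c) (hB : 0 < B) (hα0 : 0 < α) (hα1 : α < 1)
    (profit : Fin K → Fin m → ℝ) (hp : ∀ i j, 0 ≤ profit i j)
    (x : Fin K → Fin m → Bool) (hx : ¬ feasible K m a d c B α x) :
    ∑ y ∈ Finset.univ.filter (fun y => ¬ feasible K m a d c B α y),
      stepP K m (mutRLS K m) (fge K m a d c B α profit) x y *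
        (gfun (K * m) (numOnes K m y) + 1)
      ≤ gfun (K * m) (numOnes K m x) := by
  set n := K * m with hn
  set ℓ := numOnes K m x with hℓ
  set P := stepP K m (mutRLS K m) (fge K m a d c B α profit) with hP
  have hn1 : 1 ≤ n := Nat.one_le_iff_ne_zero.mpr (by positivity)
  have hℓ1 : 1 ≤ ℓ := by
    by_contra h
    exact hx (feasible_of_numOnes_zero hB hα0.le (by omega))
  have hℓn : ℓ ≤ n := numOnes_le K m x
  -- casts
  have hNcast : (K : ℝ≥0∞) * (m : ℝ≥0∞) = (n : ℝ≥0∞) := by rw [hn]; push_cast; ring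
  have hL0 : (ℓ : ℝ≥0∞) ≠ 0 := by exact_mod_cast Nat.one_le_iff_ne_zero.mp hℓ1
  have hLtop : (ℓ : ℝ≥0∞) ≠ ∞ := ENNReal.natCast_ne_top ℓ
  have hN20 : (2 * (n : ℝ≥0∞)) ≠ 0 := by
    simp only [ne_eq, mul_eq_zero, not_or]
    exact ⟨by norm_num, by exact_mod_cast Nat.one_le_iff_ne_zero.mp hn1⟩
  have hN2top : (2 * (n : ℝ≥0∞)) ≠ ∞ := by
    apply ENNReal.mul_ne_top (by norm_num) (ENNReal.natCast_ne_top n)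
  -- step A: no mass to infeasible higher levels
  have hP3 : ∀ y, ¬ feasible K m a d c B α y → ℓ < numOnes K m y → P x y = 0 := by
    intro y hAy hgt
    have hyx : y ≠ x := by
      intro h; rw [h] at hgt; omega
    rw [hP]
    show (if fge K m a d c B α profit y x then mutRLS K m x y else 0) +
      (if y = x then _ else 0) = 0
    rw [if_neg hyx, add_zero]
    by_cases hacc : fge K m a d c B α profit y x
    · rw [if_pos hacc]
      rw [mutRLS]
      split_ifs with h1 h2
      · exfalso
        have hpw := pointwise_of_hdist_le_two x y (by omega) hgt
        exact reject_up hα1 hx (bp_up ha hd hc hpw hgt) hacc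
      · exfalso
        have hpw := pointwise_of_hdist_le_two x y (by omega) hgt
        exact reject_up hα1 hx (bp_up ha hd hc hpw hgt) hacc
      · rfl
    · rw [if_neg hacc]
  -- total mass
  have htot : ∑ y, P x y ≤ 1 := by
    rw [hP, sum_stepP_eq]
    exact sum_mutRLS_le_one hK hm x
  -- decomposition
  set T0 := Finset.univ.filter (fun y => ¬ feasible K m a d c B α y) with hT0
  set S1 := T0.filter (fun y => numOnes K m y < ℓ) with hS1
  set S2 := (T0.filter (fun y => ¬ numOnes K m y < ℓ)).filter
      (fun y => numOnes K m y = ℓ) with hS2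
  set q1 := ∑ y ∈ S1, P x y with hq1
  set q2 := ∑ y ∈ S2, P x y with hq2
  have hdecomp : ∑ y ∈ T0, P x y * (gfun n (numOnes K m y) + 1)
      = ∑ y ∈ S1, P x y * (gfun n (numOnes K m y) + 1)
        + ∑ y ∈ S2, P x y * (gfun n (numOnes K m y) + 1) := by
    rw [← Finset.sum_filter_add_sum_filter_not T0 (fun y => numOnes K m y < ℓ)]
    congr 1
    rw [hS2]
    refine (Finset.sum_filter_of_ne ?_).symm
    intro y hy hne
    have h1 : ¬ feasible K m a d c B α y := (Finset.mem_filter.mp (Finset.mem_filter.mp hy).1).2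
    have h2 : ¬ numOnes K m y < ℓ := (Finset.mem_filter.mp hy).2
    by_contra hne2
    have : ℓ < numOnes K m y := by omega
    rw [hP3 y h1 this, zero_mul] at hne
    exact hne rfl
  have hbound1 : ∑ y ∈ S1, P x y * (gfun n (numOnes K m y) + 1)
      ≤ q1 * (gfun n (ℓ - 1) + 1) := by
    rw [hq1, Finset.sum_mul]
    apply Finset.sum_le_sum
    intro y hy
    have h2 : numOnes K m y < ℓ := (Finset.mem_filter.mp hy).2
    exact mul_le_mul_right (add_le_add_left (gfun_mono n (by omega)) 1) _
  have hbound2 : ∑ y ∈ S2, P x y * (gfun n (numOnes K m y) + 1)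
      = q2 * (gfun n ℓ + 1) := by
    rw [hq2, Finset.sum_mul]
    apply Finset.sum_congr rfl
    intro y hy
    rw [(Finset.mem_filter.mp hy).2]
  -- good set: one-bit down flips
  set T := (onesF x).image (fun p : Fin K × Fin m => flipDown x p.1 p.2) with hT
  have hinj : ∀ p ∈ onesF x, ∀ q ∈ onesF x,
      flipDown x p.1 p.2 = flipDown x q.1 q.2 → p = q := by
    intro p hpm q hqm h
    exact flipDown_injOn (Finset.mem_filter.mp hpm).2 (Finset.mem_filter.mp hqm).2 h
  have hS : ∑ y ∈ T, P x y = (ℓ : ℝ≥0∞) * (1 / (2 * (n : ℝ≥0∞))) := by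
    rw [hT, Finset.sum_image hinj]
    have hval : ∀ p ∈ onesF x, P x (flipDown x p.1 p.2) = 1 / (2 * (n : ℝ≥0∞)) := by
      intro p hpm
      have hpx : x p.1 p.2 = true := (Finset.mem_filter.mp hpm).2
      have hacc : fge K m a d c B α profit (flipDown x p.1 p.2) x :=
        accept_down hα1 hp hx (bp_down ha hd hc (flipDown_le x p.1 p.2))
      rw [hP]
      show (if fge K m a d c B α profit (flipDown x p.1 p.2) x
          then mutRLS K m x (flipDown x p.1 p.2) else 0) +
        (if flipDown x p.1 p.2 = x then _ else 0) = _
      rw [if_neg (flipDown_ne hpx), add_zero, if_pos hacc, mutRLS, hdist_flipDown hpx,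
        if_pos rfl, hNcast]
    rw [Finset.sum_congr rfl hval, Finset.sum_const, nsmul_eq_mul]
    congr 1
    rw [← numOnes_eq_card]
  have hTlow : ∀ y ∈ T, numOnes K m y < ℓ := by
    intro y hy
    rw [hT] at hy
    obtain ⟨p, hpm, rfl⟩ := Finset.mem_image.mp hy
    exact numOnes_flipDown_lt (Finset.mem_filter.mp hpm).2
  have hdisj12 : Disjoint S1 S2 := by
    rw [Finset.disjoint_left]
    intro y h1 h2
    exact (Finset.mem_filter.mp (Finset.mem_filter.mp h2).1).2 (Finset.mem_filter.mp h1).2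
  have hdisj2T : Disjoint S2 T := by
    rw [Finset.disjoint_left]
    intro y h2 hT'
    exact (Finset.mem_filter.mp (Finset.mem_filter.mp h2).1).2 (hTlow y hT')
  have hq12 : q1 + q2 ≤ 1 := by
    rw [hq1, hq2, ← Finset.sum_union hdisj12]
    exact le_trans (Finset.sum_le_sum_of_subset (Finset.subset_univ _)) htot
  have hq2S : q2 + (ℓ : ℝ≥0∞) * (1 / (2 * (n : ℝ≥0∞))) ≤ 1 := by
    rw [hq2, ← hS, ← Finset.sum_union hdisj2T]
    exact le_trans (Finset.sum_le_sum_of_subset (Finset.subset_univ _)) htot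
  -- key arithmetic
  have hcancel : (ℓ : ℝ≥0∞) * (1 / (2 * (n : ℝ≥0∞))) * (((2 * n : ℕ) : ℝ≥0∞) / (ℓ : ℝ≥0∞))
      = 1 := by
    have hc2 : ((2 * n : ℕ) : ℝ≥0∞) = 2 * (n : ℝ≥0∞) := by push_cast; ring
    rw [hc2, one_div, div_eq_mul_inv]
    calc (ℓ : ℝ≥0∞) * (2 * (n:ℝ≥0∞))⁻¹ * (2 * (n:ℝ≥0∞) * (ℓ:ℝ≥0∞)⁻¹)
        = ((ℓ : ℝ≥0∞) * (ℓ:ℝ≥0∞)⁻¹) * ((2 * (n:ℝ≥0∞)) * (2 * (n:ℝ≥0∞))⁻¹) := by ring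
      _ = 1 := by
          rw [ENNReal.mul_inv_cancel hL0 hLtop, ENNReal.mul_inv_cancel hN20 hN2top, one_mul]
  set D := ((2 * n : ℕ) : ℝ≥0∞) / (ℓ : ℝ≥0∞) with hD
  have hq2D : q2 * D + 1 ≤ D := by
    calc q2 * D + 1 = q2 * D + (ℓ : ℝ≥0∞) * (1 / (2 * (n : ℝ≥0∞))) * D := by rw [hcancel]
      _ = (q2 + (ℓ : ℝ≥0∞) * (1 / (2 * (n : ℝ≥0∞)))) * D := by ring
      _ ≤ 1 * D := mul_le_mul_left hq2S D
      _ = D := one_mul D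
  have hq2D' : q2 * D ≤ D - 1 := ENNReal.le_sub_of_add_le_right (by norm_num) hq2D
  have hD1 : 1 ≤ D := by
    rw [hD]
    rw [ENNReal.le_div_iff_mul_le (Or.inl hL0) (Or.inl hLtop), one_mul]
    exact_mod_cast (by omega : ℓ ≤ 2 * n)
  rcases Nat.lt_or_ge ℓ 2 with hcase | hcase
  · -- ℓ = 1
    have hℓeq : ℓ = 1 := by omega
    have hq10 : ∑ y ∈ S1, P x y * (gfun n (numOnes K m y) + 1) = 0 := by
      apply Finset.sum_eq_zero
      intro y hy
      exfalso
      have h1 : ¬ feasible K m a d c B α y := (Finset.mem_filter.mp (Finset.mem_filter.mp hy).1).2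
      have h2 : numOnes K m y < ℓ := (Finset.mem_filter.mp hy).2
      exact h1 (feasible_of_numOnes_zero hB hα0.le (by omega))
    have hgD : gfun n ℓ + 1 = D := by
      rw [hℓeq, hD, hℓeq, gfun]
      rw [Finset.Icc_eq_empty (by omega), Finset.sum_empty, add_zero]
      rw [Nat.cast_one, div_one]
      rw [← Nat.cast_one (R := ℝ≥0∞), ← Nat.cast_add]
      congr 1
      omega
    rw [hdecomp, hq10, zero_add, hbound2, hgD]
    calc q2 * D ≤ D - 1 := hq2D'
      _ = gfun n ℓ := by rw [← hgD, ENNReal.add_sub_cancel_right (by norm_num)]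
  · -- ℓ ≥ 2
    have hsucc : gfun n ℓ = gfun n (ℓ - 1) + D := gfun_succ n hcase
    rw [hdecomp, hbound2]
    calc (∑ y ∈ S1, P x y * (gfun n (numOnes K m y) + 1)) + q2 * (gfun n ℓ + 1)
        ≤ q1 * (gfun n (ℓ - 1) + 1) + q2 * (gfun n ℓ + 1) := add_le_add_left hbound1 _
      _ = q1 * (gfun n (ℓ - 1) + 1) + q2 * ((gfun n (ℓ - 1) + 1) + D) := by
          rw [hsucc]; ring_nf
      _ = (q1 + q2) * (gfun n (ℓ - 1) + 1) + q2 * D := by ring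
      _ ≤ 1 * (gfun n (ℓ - 1) + 1) + (D - 1) := add_le_add (mul_le_mul_left hq12 _) hq2D'
      _ = gfun n (ℓ - 1) + (1 + (D - 1)) := by rw [one_mul]; ring
      _ = gfun n (ℓ - 1) + D := by rw [add_tsub_cancel_of_le hD1]
      _ = gfun n ℓ := hsucc.symm

end Aux6

/-- RLS on the chance-constrained knapsack problem with correlated uniform weights:
from every initial solution, the expected number of iterations until the current solution
is feasible for the first time is at most `2n·Σ_{k=1}^n 1/k = O(n log n)`. -/
theorem RLS_finds_feasible (K m : ℕ) (hK : 1 ≤ K) (hm : 1 ≤ m)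
    (a d c B α : ℝ) (ha : 0 < a) (hd : 0 < d) (hc : 0 < c) (hB : 0 < B)
    (hα0 : 0 < α) (hα1 : α < 1)
    (profit : Fin K → Fin m → ℝ) (hp : ∀ i j, 0 ≤ profit i j)
    (x₀ : Fin K → Fin m → Bool) :
    expHitTime K m
        (stepP K m (mutRLS K m) (fge K m a d c B α profit))
        (feasible K m a d c B α) x₀ ≤
      ENNReal.ofReal (2 * (K * m : ℝ) * ∑ k ∈ Finset.Icc 1 (K * m), (1 : ℝ) / k) := by
  classical
  set n := K * m with hn
  have hn1 : 1 ≤ n := Nat.one_le_iff_ne_zero.mpr (by positivity)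
  have hmain := hit_le_drift (K := K) (m := m)
    (stepP K m (mutRLS K m) (fge K m a d c B α profit))
    (feasible K m a d c B α)
    (fun y => gfun n (numOnes K m y))
    (fun x hx => main_drift hK hm ha hd hc hB hα0 hα1 profit hp x hx) x₀
  have h1 : (1 : ℝ≥0∞) + gfun n (numOnes K m x₀) ≤ 1 + gfun n n :=
    add_le_add_right (gfun_mono n (numOnes_le K m x₀)) 1
  have h2 : (1 : ℝ≥0∞) + gfun n n
      = ∑ k ∈ Finset.Icc 1 n, ((2 * n : ℕ) : ℝ≥0∞) / (k : ℝ≥0∞) := by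
    have hins : Finset.Icc 1 n = insert 1 (Finset.Icc 2 n) := by
      ext k
      simp only [Finset.mem_Icc, Finset.mem_insert]
      omega
    rw [hins, Finset.sum_insert (by simp)]
    rw [gfun]
    rw [Nat.cast_one, div_one]
    rw [← add_assoc]
    congr 1
    rw [← Nat.cast_one (R := ℝ≥0∞), ← Nat.cast_add]
    congr 1
    omega
  have h3 : ∑ k ∈ Finset.Icc 1 n, ((2 * n : ℕ) : ℝ≥0∞) / (k : ℝ≥0∞)
      = ENNReal.ofReal (2 * (K * m : ℝ) * ∑ k ∈ Finset.Icc 1 (K * m), (1 : ℝ) / k) := by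
    have hmul : 2 * (K * m : ℝ) * ∑ k ∈ Finset.Icc 1 (K * m), (1 : ℝ) / k
        = ∑ k ∈ Finset.Icc 1 n, ((2 * n : ℕ) : ℝ) / (k : ℝ) := by
      rw [Finset.mul_sum]
      apply Finset.sum_congr rfl
      intro k _
      push_cast [hn]
      ring
    rw [hmul, ENNReal.ofReal_sum_of_nonneg]
    · apply Finset.sum_congr rfl
      intro k hk
      have hk1 : 1 ≤ k := (Finset.mem_Icc.mp hk).1
      rw [ENNReal.ofReal_div_of_pos (by exact_mod_cast hk1)]
      rw [ENNReal.ofReal_natCast, ENNReal.ofReal_natCast]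
    · intro k hk
      have hk1 : 1 ≤ k := (Finset.mem_Icc.mp hk).1
      positivity
  calc expHitTime K m (stepP K m (mutRLS K m) (fge K m a d c B α profit))
        (feasible K m a d c B α) x₀
      ≤ 1 + gfun n (numOnes K m x₀) := hmain
    _ ≤ 1 + gfun n n := h1
    _ = ∑ k ∈ Finset.Icc 1 n, ((2 * n : ℕ) : ℝ≥0∞) / (k : ℝ≥0∞) := h2
    _ = _ := h3
end Aux4
end
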